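/- arXiv:2504.12060 — 9 statements merged into one kernel-verified Lean document; each statement's English description precedes it below -/
import Mathlib

section
/- Let G=(V,E) be a graph and C a clustering (partition) of V with cost(C) = |E(C) △ E| where E(C) is the set of pairs inside the same cluster. Suppose C is a c-approximation of the optimal correlation clustering of G, let ε > 0 and μ ≤ ε/(2(1+ε)c). If G'=(V,E') is another graph on the same vertex set with |E △ E'| ≤ μ·|E(C) △ E|, then C is a ((1+ε)c)-approximation of the optimal correlation clustering of G'. -/
open scoped symmDiff Classical

/-- The set of unordered pairs of distinct vertices lying in the same cluster
of the clustering (labeling) `C`. -/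
def clusterPairs {V : Type*} {α : Type*} (C : V → α) : Set (Sym2 V) :=
  {s | ¬ s.IsDiag ∧ ∀ u v : V, s = s(u, v) → C u = C v}

/-- The correlation clustering cost of clustering `C` w.r.t. edge set `E`:
the number of violated pairs `|E(C) ∆ E|`. -/
noncomputable def ccCost {V : Type*} {α : Type*} (C : V → α) (E : Set (Sym2 V)) : ℕ :=
  (clusterPairs C ∆ E).ncard

/-- `C` is a `c`-approximate correlation clustering for the edge set `E`:
its cost is at most `c` times the cost of any clustering. -/
def IsApprox {V : Type*} (c : ℝ) (C : V → ℕ) (E : Set (Sym2 V)) : Prop :=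
  ∀ C' : V → ℕ, (ccCost C E : ℝ) ≤ c * (ccCost C' E : ℝ)

theorem stmt0 {V : Type*} [Fintype V] [DecidableEq V]
    (G G' : SimpleGraph V) (C : V → ℕ) (c ε μ : ℝ)
    (hε : 0 < ε) (hμ : μ ≤ ε / (2 * (1 + ε) * c))
    (hC : IsApprox c C G.edgeSet)
    (hclose : ((G.edgeSet ∆ G'.edgeSet).ncard : ℝ) ≤ μ * (ccCost C G.edgeSet : ℝ)) :
    IsApprox ((1 + ε) * c) C G'.edgeSet := by
  intro C'
  have tri : ∀ A B K : Set (Sym2 V), (A ∆ K).ncard ≤ (A ∆ B).ncard + (B ∆ K).ncard := by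
    intro A B K
    calc (A ∆ K).ncard ≤ ((A ∆ B) ∪ (B ∆ K)).ncard :=
          Set.ncard_le_ncard (symmDiff_triangle A B K) (Set.toFinite _)
      _ ≤ _ := Set.ncard_union_le _ _
  set Dn := (G.edgeSet ∆ G'.edgeSet).ncard with hDn
  by_cases ha : ccCost C G.edgeSet = 0
  · -- then D = 0, so the edge sets are equal
    have hD0 : (Dn : ℝ) ≤ 0 := by
      have := hclose; rw [ha] at this; simpa using this
    have hDn0 : Dn = 0 := by exact_mod_cast le_antisymm hD0 (by positivity)
    have hEE : G.edgeSet = G'.edgeSet := by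
      have h := (Set.ncard_eq_zero (Set.toFinite _)).mp hDn0
      exact symmDiff_eq_bot.mp h
    rw [show ccCost C G'.edgeSet = ccCost C G.edgeSet by rw [← hEE],
        show ccCost C' G'.edgeSet = ccCost C' G.edgeSet by rw [← hEE], ha]
    have h := hC C'
    rw [ha] at h
    push_cast at h ⊢
    nlinarith [hε]
  · -- main case
    have haR : (0:ℝ) < (ccCost C G.edgeSet : ℝ) := by
      exact_mod_cast Nat.pos_of_ne_zero ha
    have hc1 : (1:ℝ) ≤ c := by
      have h := hC C
      nlinarith
    have hDnn : (0:ℝ) ≤ (Dn : ℝ) := by positivity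
    have hμ0 : 0 ≤ μ := by nlinarith
    have hx : (0:ℝ) < (1 + ε) * c := by nlinarith
    have k1 : (1 + ε) * c * μ ≤ ε / 2 := by
      have := mul_le_mul_of_nonneg_left hμ (le_of_lt hx)
      have heq : (1 + ε) * c * (ε / (2 * (1 + ε) * c)) = ε / 2 := by
        field_simp
      linarith [heq ▸ this]
    have h1 : (ccCost C G'.edgeSet : ℝ) ≤ (ccCost C G.edgeSet : ℝ) + Dn := by
      have := tri (clusterPairs C) G.edgeSet G'.edgeSet
      exact_mod_cast this
    have h2 : (ccCost C' G.edgeSet : ℝ) ≤ (ccCost C' G'.edgeSet : ℝ) + Dn := by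
      have := tri (clusterPairs C') G'.edgeSet G.edgeSet
      rw [symmDiff_comm G'.edgeSet G.edgeSet] at this
      unfold ccCost
      exact_mod_cast this
    have h3 := hC C'
    have hb' : (0:ℝ) ≤ (ccCost C' G'.edgeSet : ℝ) := by positivity
    nlinarith [mul_le_mul_of_nonneg_left hclose (le_of_lt hx),
      mul_le_mul_of_nonneg_left h2 (le_of_lt hx),
      mul_le_mul_of_nonneg_right k1 (le_of_lt haR),
      mul_le_mul_of_nonneg_right (le_trans hμ (by
        have : (2:ℝ) ≤ 2 * (1 + ε) * c := by nlinarith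
        exact div_le_div_of_nonneg_left (le_of_lt hε) (by norm_num) this |>.trans_eq rfl
        ) : μ ≤ ε / 2) (le_of_lt haR)]
end

section
/- Every strong cluster (i.e., every (1/6)-agreeing cluster) is subsumed in every locally optimal clustering: if K is (1/6)-agreeing and C is a clustering such that cost(C) ≤ cost(C + S) for every subset S ⊆ V, then there exists a cluster C_i of C with K ⊆ C_i. -/
open scoped symmDiff Classical
open Finset

/-- The closed neighborhood of `v`: the neighbors of `v` together with `v`. -/
def closedNbhd {V : Type*} (G : SimpleGraph V) (v : V) : Set V :=
  insert v (G.neighborSet v)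

/-- A set `K` of vertices is `β`-agreeing if for every `v ∈ K`,
`|N(v) ∆ K| < β·|K|` where `N(v)` is the closed neighborhood. -/
def Agreeing {V : Type*} (G : SimpleGraph V) (β : ℝ) (K : Set V) : Prop :=
  ∀ v ∈ K, ((closedNbhd G v ∆ K).ncard : ℝ) < β * K.ncard

/-- The clustering `C + S`: remove the elements of `S` from their clusters
and add `S` as a new cluster. -/
noncomputable def addCluster {V : Type*} (C : V → ℕ) (S : Set V) : V → ℕ :=
  fun v => if v ∈ S then 0 else C v + 1

set_option linter.unusedSectionVars false

section Aux
variable {V : Type*} [Fintype V] [DecidableEq V] (G : SimpleGraph V)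

/-- the mistake graph of a clustering -/
def mG (C : V → ℕ) : SimpleGraph V where
  Adj u v := u ≠ v ∧ ¬(C u = C v ↔ G.Adj u v)
  symm := by
    refine ⟨?_⟩
    intro u v ⟨h1, h2⟩
    refine ⟨h1.symm, ?_⟩
    intro hi; exact h2 (by rw [eq_comm, G.adj_comm]; exact hi)
  loopless := by refine ⟨?_⟩; intro v ⟨h1, _⟩; exact h1 rfl

lemma mem_clusterPairs (C : V → ℕ) (u v : V) :
    s(u, v) ∈ clusterPairs C ↔ u ≠ v ∧ C u = C v := by
  constructor
  · rintro ⟨h1, h2⟩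
    exact ⟨fun h => h1 (by simp [h]), h2 u v rfl⟩
  · rintro ⟨h1, h2⟩
    refine ⟨by simp [h1], ?_⟩
    intro u' v' h
    rw [Sym2.eq_iff] at h
    rcases h with ⟨rfl, rfl⟩ | ⟨rfl, rfl⟩
    · exact h2
    · exact h2.symm

lemma mG_edgeSet (C : V → ℕ) : (mG G C).edgeSet = clusterPairs C ∆ G.edgeSet := by
  ext s
  induction s using Sym2.ind with
  | _ u v =>
    rw [SimpleGraph.mem_edgeSet, Set.mem_symmDiff, mem_clusterPairs,
      SimpleGraph.mem_edgeSet]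
    constructor
    · rintro ⟨h1, h2⟩
      by_cases h : G.Adj u v
      · exact Or.inr ⟨h, by tauto⟩
      · exact Or.inl ⟨⟨h1, by tauto⟩, h⟩
    · rintro (⟨⟨h1, h2⟩, h3⟩ | ⟨h1, h2⟩)
      · exact ⟨h1, by tauto⟩
      · have hne := G.ne_of_adj h1
        exact ⟨hne, by tauto⟩

noncomputable def mk' (C : V → ℕ) (u v : V) : ℕ :=
  if u ≠ v ∧ ¬(C u = C v ↔ G.Adj u v) then 1 else 0

noncomputable def cost2 (C : V → ℕ) : ℕ := ∑ u, ∑ v, mk' G C u v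

lemma cost2_eq (C : V → ℕ) : cost2 G C = 2 * ccCost C G.edgeSet := by
  have h1 : ccCost C G.edgeSet = (mG G C).edgeFinset.card := by
    rw [ccCost, ← mG_edgeSet, SimpleGraph.edgeFinset,
      Set.ncard_eq_toFinset_card']
  rw [h1, SimpleGraph.two_mul_card_edgeFinset]
  rw [cost2]
  rw [Finset.card_filter]
  rw [Fintype.sum_prod_type]
  refine Finset.sum_congr rfl fun u _ => Finset.sum_congr rfl fun v _ => ?_
  simp [mk', mG]
  by_cases h : (¬u = v ∧ ¬(C u = C v ↔ G.Adj u v)) <;> simp only [h, ↓reduceIte]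

noncomputable def eNA (u v : V) : ℕ := if u ≠ v ∧ ¬G.Adj u v then 1 else 0
noncomputable def fA (u v : V) : ℕ := if G.Adj u v then 1 else 0

lemma mk'_comm (C : V → ℕ) (u v : V) : mk' G C u v = mk' G C v u := by
  unfold mk'
  refine if_congr ?_ rfl rfl
  constructor <;> rintro ⟨h1, h2⟩ <;>
    exact ⟨h1.symm, fun hi => h2 (by rw [eq_comm, G.adj_comm]; exact hi)⟩

lemma fA_comm (u v : V) : fA G u v = fA G v u := by
  unfold fA
  exact if_congr (G.adj_comm u v) rfl rfl

lemma eNA_comm (u v : V) : eNA G u v = eNA G v u := by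
  unfold eNA
  exact if_congr (and_congr ne_comm (not_congr (G.adj_comm u v))) rfl rfl

lemma mk'_join (C : V → ℕ) {u v : V} (h : C u = C v) :
    mk' G C u v = eNA G u v := by
  unfold mk' eNA
  refine if_congr ?_ rfl rfl
  constructor <;> rintro ⟨h1, h2⟩ <;> exact ⟨h1, by tauto⟩

lemma mk'_cut (C : V → ℕ) {u v : V} (h : C u ≠ C v) :
    mk' G C u v = fA G u v := by
  unfold mk' fA
  have hne : u ≠ v := fun he => h (by rw [he])
  by_cases ha : G.Adj u v
  · rw [if_pos ha, if_pos ⟨hne, by tauto⟩]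
  · rw [if_neg ha, if_neg (by tauto)]

lemma one_le_fA_add_eNA {u v : V} (hne : u ≠ v) : 1 ≤ fA G u v + eNA G u v := by
  unfold fA eNA
  by_cases ha : G.Adj u v <;> simp [ha, hne]

lemma eNA_le_one (u v : V) : eNA G u v ≤ 1 := by
  unfold eNA; split <;> omega

lemma sum_split (g : V → V → ℕ) (A : Finset V) :
    ∑ u, ∑ v, g u v =
      ((∑ u ∈ A, ∑ v ∈ A, g u v + ∑ u ∈ A, ∑ v ∈ Aᶜ, g u v) +
       (∑ u ∈ Aᶜ, ∑ v ∈ A, g u v + ∑ u ∈ Aᶜ, ∑ v ∈ Aᶜ, g u v)) := by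
  rw [← Finset.sum_add_sum_compl A (fun u => ∑ v, g u v)]
  congr 1 <;>
  · rw [← Finset.sum_add_distrib]
    exact Finset.sum_congr rfl fun u _ => (Finset.sum_add_sum_compl A _).symm

lemma master (C : V → ℕ) (A : Finset V)
    (h : cost2 G C ≤ cost2 G (addCluster C ↑A)) :
    ∑ u ∈ A, ∑ v ∈ A, mk' G C u v +
      (∑ u ∈ A, ∑ v ∈ Aᶜ, mk' G C u v + ∑ u ∈ Aᶜ, ∑ v ∈ A, mk' G C u v) ≤
    ∑ u ∈ A, ∑ v ∈ A, eNA G u v +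
      (∑ u ∈ A, ∑ v ∈ Aᶜ, fA G u v + ∑ u ∈ Aᶜ, ∑ v ∈ A, fA G u v) := by
  rw [cost2, cost2, sum_split (mk' G C) A,
    sum_split (mk' G (addCluster C ↑A)) A] at h
  have e1 : ∑ u ∈ A, ∑ v ∈ A, mk' G (addCluster C ↑A) u v =
      ∑ u ∈ A, ∑ v ∈ A, eNA G u v := by
    refine Finset.sum_congr rfl fun u hu => Finset.sum_congr rfl fun v hv => ?_
    exact mk'_join G _ (by simp [addCluster, Finset.mem_coe.2 hu, Finset.mem_coe.2 hv])
  have e2 : ∑ u ∈ A, ∑ v ∈ Aᶜ, mk' G (addCluster C ↑A) u v =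
      ∑ u ∈ A, ∑ v ∈ Aᶜ, fA G u v := by
    refine Finset.sum_congr rfl fun u hu => Finset.sum_congr rfl fun v hv => ?_
    rw [Finset.mem_compl] at hv
    exact mk'_cut G _ (by simp [addCluster, Finset.mem_coe.2 hu, hv])
  have e3 : ∑ u ∈ Aᶜ, ∑ v ∈ A, mk' G (addCluster C ↑A) u v =
      ∑ u ∈ Aᶜ, ∑ v ∈ A, fA G u v := by
    refine Finset.sum_congr rfl fun u hu => Finset.sum_congr rfl fun v hv => ?_
    rw [Finset.mem_compl] at hu
    exact mk'_cut G _ (by simp [addCluster, Finset.mem_coe.2 hv, hu])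
  have e4 : ∑ u ∈ Aᶜ, ∑ v ∈ Aᶜ, mk' G (addCluster C ↑A) u v =
      ∑ u ∈ Aᶜ, ∑ v ∈ Aᶜ, mk' G C u v := by
    refine Finset.sum_congr rfl fun u hu => Finset.sum_congr rfl fun v hv => ?_
    rw [Finset.mem_compl] at hu hv
    unfold mk'
    congr 2
    simp [addCluster, hu, hv]
  rw [e1, e2, e3, e4] at h
  omega

lemma swap_sum {g : V → V → ℕ} (hg : ∀ u v, g u v = g v u) (X Y : Finset V) :
    ∑ u ∈ X, ∑ v ∈ Y, g u v = ∑ u ∈ Y, ∑ v ∈ X, g u v := by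
  rw [Finset.sum_comm]
  exact Finset.sum_congr rfl fun u _ => Finset.sum_congr rfl fun v _ => hg v u

lemma block_le (g : V → V → ℕ) {X Y X' Y' : Finset V} (hX : X' ⊆ X) (hY : Y' ⊆ Y) :
    ∑ u ∈ X', ∑ v ∈ Y', g u v ≤ ∑ u ∈ X, ∑ v ∈ Y, g u v :=
  le_trans (Finset.sum_le_sum fun _ _ => Finset.sum_le_sum_of_subset hY)
    (Finset.sum_le_sum_of_subset hX)

noncomputable def bN (K' : Finset V) (v : V) : ℕ := ∑ u ∈ K', eNA G v u
noncomputable def cN (K' : Finset V) (v : V) : ℕ := ∑ u ∈ K'ᶜ, fA G v u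

lemma agree_bound {K : Set V} (hK : Agreeing G (1/6) K) {v : V} (hv : v ∈ K) :
    6 * (bN G (Set.toFinite K).toFinset v + cN G (Set.toFinite K).toFinset v) + 1
      ≤ (Set.toFinite K).toFinset.card := by
  classical
  set K' := (Set.toFinite K).toFinset with hK'
  have hmem : ∀ u, u ∈ K' ↔ u ∈ K := fun u => Set.Finite.mem_toFinset _
  set F1 := K'.filter fun u => u ≠ v ∧ ¬G.Adj v u with hF1
  set F2 := K'ᶜ.filter fun u => G.Adj v u with hF2
  have hb : bN G K' v = F1.card := by
    rw [hF1, Finset.card_filter, bN]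
    exact Finset.sum_congr rfl fun u _ => by
      unfold eNA; exact if_congr (and_congr_left' ne_comm.symm) rfl rfl
  have hc : cN G K' v = F2.card := by
    rw [hF2, Finset.card_filter, cN]
    rfl
  have hset : closedNbhd G v ∆ K = ↑(F1 ∪ F2) := by
    ext u
    simp only [Set.mem_symmDiff, Finset.coe_union, Set.mem_union, Finset.mem_coe,
      hF1, hF2, Finset.mem_filter, Finset.mem_compl, hmem, closedNbhd,
      Set.mem_insert_iff, SimpleGraph.mem_neighborSet]
    constructor
    · rintro (⟨h1 | h1, h2⟩ | ⟨h1, h2⟩)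
      · exact absurd (h1 ▸ hv) h2
      · exact Or.inr ⟨h2, h1⟩
      · exact Or.inl ⟨h1, fun he => h2 (Or.inl he), fun ha => h2 (Or.inr ha)⟩
    · rintro (⟨h1, h2, h3⟩ | ⟨h1, h2⟩)
      · exact Or.inr ⟨h1, by tauto⟩
      · exact Or.inl ⟨Or.inr h2, h1⟩
  have hdisj : Disjoint F1 F2 :=
    Finset.disjoint_filter_filter (disjoint_compl_right)
  have hcard : (closedNbhd G v ∆ K).ncard = F1.card + F2.card := by
    rw [hset, Set.ncard_coe_finset, Finset.card_union_of_disjoint hdisj]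
  have hkc : (K.ncard : ℝ) = (K'.card : ℝ) := by
    rw [Set.ncard_eq_toFinset_card K (Set.toFinite K)]
  have hlt := hK v hv
  rw [hcard, hkc] at hlt
  have h6 : (6 * (F1.card + F2.card) : ℝ) < (K'.card : ℝ) := by
    push_cast at hlt ⊢
    linarith
  have h7 : 6 * (F1.card + F2.card) < K'.card := by exact_mod_cast h6
  rw [hb, hc]
  omega

end Aux
theorem stmt5 {V : Type*} [Fintype V] [DecidableEq V]
    (G : SimpleGraph V) (K : Set V) (hK : Agreeing G (1/6) K)
    (C : V → ℕ)
    (hloc : ∀ S : Set V, ccCost C G.edgeSet ≤ ccCost (addCluster C S) G.edgeSet) :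
    ∃ i : ℕ, K ⊆ {v | C v = i} := by
  classical
  by_contra hcon
  push_neg at hcon
  set K' : Finset V := (Set.toFinite K).toFinset with hK'def
  have hmem : ∀ u, u ∈ K' ↔ u ∈ K := fun u => Set.Finite.mem_toFinset _
  set k := K'.card with hkdef
  -- the agreement bound
  have hbc : ∀ v ∈ K', 6 * (bN G K' v + cN G K' v) + 1 ≤ k := by
    intro v hv
    exact agree_bound G hK ((hmem v).1 hv)
  clear_value K' k
  -- master inequality for all moves
  have hmaster : ∀ A : Finset V,
      ∑ u ∈ A, ∑ v ∈ A, mk' G C u v +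
        (∑ u ∈ A, ∑ v ∈ Aᶜ, mk' G C u v + ∑ u ∈ Aᶜ, ∑ v ∈ A, mk' G C u v) ≤
      ∑ u ∈ A, ∑ v ∈ A, eNA G u v +
        (∑ u ∈ A, ∑ v ∈ Aᶜ, fA G u v + ∑ u ∈ Aᶜ, ∑ v ∈ A, fA G u v) := by
    intro A
    refine master G C A ?_
    rw [cost2_eq, cost2_eq]
    exact Nat.mul_le_mul_left 2 (hloc ↑A)
  -- K is nonempty
  have hk1 : 1 ≤ k := by
    obtain ⟨v0, hv0K, _⟩ := Set.not_subset.1 (hcon 0)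
    have : v0 ∈ K' := (hmem v0).2 hv0K
    have := Finset.card_pos.2 ⟨v0, this⟩
    omega
  -- the move S = K
  have hM1 : (∑ u ∈ K', ∑ v ∈ K', mk' G C u v) +
      2 * (∑ u ∈ K', ∑ v ∈ K'ᶜ, mk' G C u v) ≤
      (∑ v ∈ K', bN G K' v) + 2 * (∑ v ∈ K', cN G K' v) := by
    have h := hmaster K'
    rw [swap_sum (mk'_comm G C) K'ᶜ K', swap_sum (fA_comm G) K'ᶜ K'] at h
    simp only [bN, cN]
    omega
  -- sum of agreement bounds over K'
  have hbcK : 6 * (∑ v ∈ K', (bN G K' v + cN G K' v)) + k ≤ k * k := by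
    have h := Finset.sum_le_sum hbc
    rw [Finset.sum_const, smul_eq_mul, ← hkdef] at h
    have e : ∑ v ∈ K', (6 * (bN G K' v + cN G K' v) + 1) =
        6 * (∑ v ∈ K', (bN G K' v + cN G K' v)) + k := by
      rw [Finset.sum_add_distrib, ← Finset.mul_sum, Finset.sum_const,
        smul_eq_mul, mul_one, hkdef]
    rw [e] at h
    exact h
  by_cases hsplit : ∃ w ∈ K', k + 1 ≤ 2 * (K'.filter fun u => C u = C w).card
  · -- Case B : a big piece exists
    obtain ⟨w, hw, hwcard⟩ := hsplit
    set i₀ := C w with hi0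
    set P := K'.filter (fun u => C u = i₀) with hPdef
    set T := K'.filter (fun u => ¬(C u = i₀)) with hTdef
    set M := K'ᶜ.filter (fun u => C u = i₀) with hMdef
    set D := (univ : Finset V).filter (fun u => C u = i₀) with hDdef
    have hwP : k + 1 ≤ 2 * P.card := hwcard
    have hPT : Disjoint P T := Finset.disjoint_filter_filter_not K' K' _
    have hKPT : K' = P ∪ T := (Finset.filter_union_filter_not_eq _ K').symm
    have hPTcard : P.card + T.card = k := by
      rw [hkdef]
      exact Finset.card_filter_add_card_filter_not (s := K') (p := fun u => C u = i₀)
    -- membership facts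
    have hPi : ∀ u ∈ P, C u = i₀ := fun u hu => (Finset.mem_filter.1 hu).2
    have hTi : ∀ u ∈ T, C u ≠ i₀ := fun u hu => (Finset.mem_filter.1 hu).2
    have hMi : ∀ u ∈ M, C u = i₀ := fun u hu => (Finset.mem_filter.1 hu).2
    have hDi : ∀ u ∈ D, C u = i₀ := fun u hu => (Finset.mem_filter.1 hu).2
    have hPK : P ⊆ K' := Finset.filter_subset _ _
    have hTK : T ⊆ K' := Finset.filter_subset _ _
    have hMKc : M ⊆ K'ᶜ := Finset.filter_subset _ _
    have hPD : P ⊆ D := fun u hu => Finset.mem_filter.2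
      ⟨Finset.mem_univ u, (Finset.mem_filter.1 hu).2⟩
    have hPM : Disjoint P M := Finset.disjoint_filter_filter disjoint_compl_right
    have hDPM : D = P ∪ M := by
      ext u
      simp only [hDdef, hPdef, hMdef, Finset.mem_filter, Finset.mem_union,
        Finset.mem_compl, Finset.mem_univ, true_and]
      by_cases hu : u ∈ K' <;> tauto
    have hDT : Disjoint D T := by
      rw [Finset.disjoint_left]
      intro u hu hu'
      exact hTi u hu' (hDi u hu)
    have hKDT : K' ⊆ D ∪ T := by
      intro u hu
      by_cases hc : C u = i₀
      · exact Finset.mem_union_left _ (Finset.mem_filter.2 ⟨Finset.mem_univ u, hc⟩)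
      · exact Finset.mem_union_right _ (Finset.mem_filter.2 ⟨hu, hc⟩)
    have hRKc : (D ∪ T)ᶜ ⊆ K'ᶜ := Finset.compl_subset_compl.2 hKDT
    have hRD : ∀ u ∈ (D ∪ T)ᶜ, C u ≠ i₀ := by
      intro u hu hc
      exact (Finset.mem_compl.1 hu) (Finset.mem_union_left _
        (Finset.mem_filter.2 ⟨Finset.mem_univ u, hc⟩))
    -- T is nonempty
    have hs1 : 1 ≤ T.card := by
      obtain ⟨v1, hv1K, hv1⟩ := Set.not_subset.1 (hcon i₀)
      have hv1' : C v1 ≠ i₀ := hv1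
      exact Finset.card_pos.2 ⟨v1, Finset.mem_filter.2 ⟨(hmem v1).2 hv1K, hv1'⟩⟩
    -- four-block split of the K'×K' sum
    have hsplit4 : ∀ g : V → V → ℕ, ∑ u ∈ K', ∑ v ∈ K', g u v =
        ∑ u ∈ P, ∑ v ∈ P, g u v + ∑ u ∈ P, ∑ v ∈ T, g u v +
        ∑ u ∈ T, ∑ v ∈ P, g u v + ∑ u ∈ T, ∑ v ∈ T, g u v := by
      intro g
      rw [hKPT]
      simp only [Finset.sum_union hPT, Finset.sum_add_distrib]
      omega
    -- cut blocks between P and T count edges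
    have hPTblock : ∑ u ∈ P, ∑ v ∈ T, mk' G C u v =
        ∑ v ∈ T, ∑ u ∈ P, fA G v u := by
      rw [Finset.sum_comm]
      refine Finset.sum_congr rfl fun v hv => Finset.sum_congr rfl fun u hu => ?_
      rw [mk'_cut G C (fun h => hTi v hv (by rw [← h]; exact hPi u hu)), fA_comm]
    have hTPblock : ∑ u ∈ T, ∑ v ∈ P, mk' G C u v =
        ∑ v ∈ T, ∑ u ∈ P, fA G v u := by
      refine Finset.sum_congr rfl fun v hv => Finset.sum_congr rfl fun u hu => ?_
      exact mk'_cut G C (by rw [hPi u hu]; exact hTi v hv)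
    -- lower bound for the inner sum (move S = K)
    have hin : 2 * (∑ v ∈ T, ∑ u ∈ P, fA G v u) ≤
        ∑ u ∈ K', ∑ v ∈ K', mk' G C u v := by
      rw [hsplit4 (mk' G C), hPTblock, hTPblock]
      omega
    -- lower bound for the cross sum (move S = K)
    have hout : ∑ v ∈ P, ∑ u ∈ M, eNA G v u ≤
        ∑ u ∈ K', ∑ v ∈ K'ᶜ, mk' G C u v := by
      have e : ∑ v ∈ P, ∑ u ∈ M, eNA G v u = ∑ u ∈ P, ∑ v ∈ M, mk' G C u v := by
        refine Finset.sum_congr rfl fun v hv => Finset.sum_congr rfl fun u hu => ?_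
        rw [mk'_join G C (by rw [hPi v hv, hMi u hu])]
      rw [e]
      exact block_le _ hPK hMKc
    -- per-vertex bounds
    have hxa : ∀ v ∈ T, P.card ≤ (∑ u ∈ P, fA G v u) + bN G K' v := by
      intro v hv
      have h1 : P.card ≤ ∑ u ∈ P, fA G v u + ∑ u ∈ P, eNA G v u := by
        rw [← Finset.sum_add_distrib, Finset.card_eq_sum_ones]
        refine Finset.sum_le_sum fun u hu => ?_
        exact one_le_fA_add_eNA G (fun h => hTi v hv (by rw [h]; exact hPi u hu))
      have h2 : ∑ u ∈ P, eNA G v u ≤ bN G K' v := by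
        rw [bN]; exact Finset.sum_le_sum_of_subset hPK
      omega
    have hym : ∀ v ∈ P, M.card ≤ (∑ u ∈ M, eNA G v u) + cN G K' v := by
      intro v hv
      have h1 : M.card ≤ ∑ u ∈ M, (eNA G v u + fA G v u) := by
        rw [Finset.card_eq_sum_ones]
        refine Finset.sum_le_sum fun u hu => ?_
        have hvu : v ≠ u := by
          intro h
          exact (Finset.mem_compl.1 (hMKc hu)) (h ▸ hPK hv)
        have := one_le_fA_add_eNA G hvu
        omega
      rw [Finset.sum_add_distrib] at h1
      have h2 : ∑ u ∈ M, fA G v u ≤ cN G K' v := by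
        rw [cN]; exact Finset.sum_le_sum_of_subset hMKc
      omega
    -- inequality B1
    have hB1 : 2 * (T.card * P.card + P.card * M.card) ≤
        4 * ∑ v ∈ K', (bN G K' v + cN G K' v) := by
      have h1 : T.card * P.card ≤
          (∑ v ∈ T, ∑ u ∈ P, fA G v u) + ∑ v ∈ T, bN G K' v := by
        have h := Finset.sum_le_sum hxa
        rw [Finset.sum_const, smul_eq_mul, Finset.sum_add_distrib] at h
        exact h
      have h2 : P.card * M.card ≤
          (∑ v ∈ P, ∑ u ∈ M, eNA G v u) + ∑ v ∈ P, cN G K' v := by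
        have h := Finset.sum_le_sum hym
        rw [Finset.sum_const, smul_eq_mul, Finset.sum_add_distrib] at h
        exact h
      have h3 : ∑ v ∈ T, bN G K' v ≤ ∑ v ∈ K', bN G K' v :=
        Finset.sum_le_sum_of_subset hTK
      have h4 : ∑ v ∈ P, cN G K' v ≤ ∑ v ∈ K', cN G K' v :=
        Finset.sum_le_sum_of_subset hPK
      have h5 : ∑ v ∈ K', (bN G K' v + cN G K' v) =
          ∑ v ∈ K', bN G K' v + ∑ v ∈ K', cN G K' v := Finset.sum_add_distrib
      -- combine with hM1, hin, hout
      generalize (T.card * P.card) = q1 at h1 ⊢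
      generalize (P.card * M.card) = q2 at h2 ⊢
      omega
    -- B2 : the move S = D ∪ T
    have hmove2 := hmaster (D ∪ T)
    -- rewrite the joined blocks
    have eq1 : ∑ u ∈ D, ∑ v ∈ D, mk' G C u v = ∑ u ∈ D, ∑ v ∈ D, eNA G u v := by
      refine Finset.sum_congr rfl fun u hu => Finset.sum_congr rfl fun v hv => ?_
      exact mk'_join G C (by rw [hDi u hu, hDi v hv])
    have eq2 : ∑ u ∈ D, ∑ v ∈ (D ∪ T)ᶜ, mk' G C u v =
        ∑ u ∈ D, ∑ v ∈ (D ∪ T)ᶜ, fA G u v := by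
      refine Finset.sum_congr rfl fun u hu => Finset.sum_congr rfl fun v hv => ?_
      exact mk'_cut G C (by rw [hDi u hu]; exact fun h => hRD v hv h.symm)
    have eq3 : ∑ u ∈ (D ∪ T)ᶜ, ∑ v ∈ D, mk' G C u v =
        ∑ u ∈ (D ∪ T)ᶜ, ∑ v ∈ D, fA G u v := by
      refine Finset.sum_congr rfl fun u hu => Finset.sum_congr rfl fun v hv => ?_
      exact mk'_cut G C (by rw [hDi v hv]; exact hRD u hu)
    simp only [Finset.sum_union hDT, Finset.sum_add_distrib] at hmove2
    rw [eq1, eq2, eq3] at hmove2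
    -- lower bounds for remaining mistake blocks
    have bnd1 : ∑ v ∈ T, ∑ u ∈ P, fA G v u ≤ ∑ u ∈ D, ∑ v ∈ T, mk' G C u v := by
      rw [← hPTblock]
      exact block_le _ hPD Finset.Subset.rfl
    have bnd2 : ∑ v ∈ T, ∑ u ∈ P, fA G v u ≤ ∑ u ∈ T, ∑ v ∈ D, mk' G C u v := by
      rw [← hTPblock]
      exact block_le _ Finset.Subset.rfl hPD
    -- upper bounds for the eNA blocks
    have bnd3 : ∑ u ∈ D, ∑ v ∈ T, eNA G u v ≤
        (∑ v ∈ T, ∑ u ∈ P, eNA G v u) + M.card * T.card := by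
      rw [hDPM, Finset.sum_union hPM]
      have e1 : ∑ u ∈ P, ∑ v ∈ T, eNA G u v = ∑ v ∈ T, ∑ u ∈ P, eNA G v u := by
        rw [Finset.sum_comm]
        exact Finset.sum_congr rfl fun v _ => Finset.sum_congr rfl fun u _ =>
          eNA_comm G u v
      have e2 : ∑ u ∈ M, ∑ v ∈ T, eNA G u v ≤ M.card * T.card := by
        calc ∑ u ∈ M, ∑ v ∈ T, eNA G u v ≤ ∑ u ∈ M, ∑ v ∈ T, 1 :=
              Finset.sum_le_sum fun u _ => Finset.sum_le_sum fun v _ => eNA_le_one G u v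
          _ = M.card * T.card := by simp [Finset.sum_const, mul_comm]
      omega
    have bnd4 : ∑ u ∈ T, ∑ v ∈ D, eNA G u v ≤
        (∑ v ∈ T, ∑ u ∈ P, eNA G v u) + T.card * M.card := by
      have e0 : ∀ u, ∑ v ∈ D, eNA G u v =
          ∑ v ∈ P, eNA G u v + ∑ v ∈ M, eNA G u v := by
        intro u; rw [hDPM, Finset.sum_union hPM]
      simp only [e0, Finset.sum_add_distrib]
      have e2 : ∑ u ∈ T, ∑ v ∈ M, eNA G u v ≤ T.card * M.card := by
        calc ∑ u ∈ T, ∑ v ∈ M, eNA G u v ≤ ∑ u ∈ T, ∑ v ∈ M, 1 :=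
              Finset.sum_le_sum fun u _ => Finset.sum_le_sum fun v _ => eNA_le_one G u v
          _ = T.card * M.card := by simp [Finset.sum_const, mul_comm]
      omega
    have bnd6 : ∑ u ∈ T, ∑ v ∈ (D ∪ T)ᶜ, fA G u v ≤ ∑ v ∈ T, cN G K' v := by
      refine Finset.sum_le_sum fun v hv => ?_
      rw [cN]
      exact Finset.sum_le_sum_of_subset hRKc
    have bnd7 : ∑ u ∈ (D ∪ T)ᶜ, ∑ v ∈ T, fA G u v ≤ ∑ v ∈ T, cN G K' v := by
      rw [swap_sum (fA_comm G)]
      exact bnd6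
    -- nP + nT = bN on T
    have bnd9 : ∑ v ∈ T, ∑ u ∈ P, eNA G v u + ∑ u ∈ T, ∑ v ∈ T, eNA G u v =
        ∑ v ∈ T, bN G K' v := by
      rw [← Finset.sum_add_distrib]
      refine Finset.sum_congr rfl fun v hv => ?_
      rw [bN, hKPT, Finset.sum_union hPT]
    -- per-vertex count over T
    have bnd8 : T.card * P.card ≤
        (∑ v ∈ T, ∑ u ∈ P, fA G v u) + ∑ v ∈ T, ∑ u ∈ P, eNA G v u := by
      have h1 : ∀ v ∈ T, P.card ≤ ∑ u ∈ P, fA G v u + ∑ u ∈ P, eNA G v u := by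
        intro v hv
        rw [← Finset.sum_add_distrib, Finset.card_eq_sum_ones]
        refine Finset.sum_le_sum fun u hu => ?_
        exact one_le_fA_add_eNA G (fun h => hTi v hv (by rw [h]; exact hPi u hu))
      have h := Finset.sum_le_sum h1
      rw [Finset.sum_const, smul_eq_mul, Finset.sum_add_distrib] at h
      exact h
    -- agreement bound summed over T
    have hbcT : 6 * (∑ v ∈ T, (bN G K' v + cN G K' v)) + T.card ≤ T.card * k := by
      have h := Finset.sum_le_sum (fun v hv => hbc v (hTK hv))
      rw [Finset.sum_const, smul_eq_mul] at h
      have e : ∑ v ∈ T, (6 * (bN G K' v + cN G K' v) + 1) =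
          6 * (∑ v ∈ T, (bN G K' v + cN G K' v)) + T.card := by
        rw [Finset.sum_add_distrib, ← Finset.mul_sum, Finset.sum_const,
          smul_eq_mul, mul_one]
      rw [e] at h
      exact h
    have hTsum : ∑ v ∈ T, (bN G K' v + cN G K' v) =
        ∑ v ∈ T, bN G K' v + ∑ v ∈ T, cN G K' v := Finset.sum_add_distrib
    -- B2 conclusion : per T-vertex, a₁ is small
    have hB2 : 2 * (T.card * P.card) ≤
        4 * (∑ v ∈ T, (bN G K' v + cN G K' v)) + 2 * (M.card * T.card) := by
      have hcomm : T.card * M.card = M.card * T.card := Nat.mul_comm _ _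
      generalize (T.card * P.card) = q1 at bnd8 ⊢
      generalize (M.card * T.card) = q2 at bnd3 hcomm ⊢
      generalize (T.card * M.card) = q3 at bnd4 hcomm
      omega
    have hB2' : 6 * P.card + 2 ≤ 2 * k + 6 * M.card := by
      have h1 : T.card * (6 * P.card + 2) ≤ T.card * (2 * k + 6 * M.card) := by
        have e1 : T.card * (6 * P.card + 2) =
            3 * (2 * (T.card * P.card)) + 2 * T.card := by ring
        have e2 : T.card * (2 * k + 6 * M.card) =
            2 * (T.card * k) + 3 * (2 * (M.card * T.card)) := by ring
        rw [e1, e2]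
        linarith [hB2, hbcT]
      exact Nat.le_of_mul_le_mul_left h1 hs1
    -- final contradiction
    have hB1' : 3 * (T.card * P.card + P.card * M.card) + k ≤ k * k := by
      linarith [hB1, hbcK]
    have h10 : 2 * k + 1 ≤ 3 * (T.card + M.card) := by omega
    have h11 : (k + 1) * (2 * k + 1) ≤ (2 * P.card) * (3 * (T.card + M.card)) :=
      Nat.mul_le_mul hwP h10
    have h12 : (2 * P.card) * (3 * (T.card + M.card)) =
        6 * (T.card * P.card + P.card * M.card) := by ring
    have h13 : (k + 1) * (2 * k + 1) = 2 * (k * k) + 3 * k + 1 := by ring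
    rw [h12, h13] at h11
    linarith [h11, hB1']
  · -- Case A : all pieces are small
    push_neg at hsplit
    have hA : ∀ v ∈ K', k ≤ 2 * (∑ u ∈ K', mk' G C v u) + 2 * bN G K' v := by
      intro v hv
      have hpart := Finset.card_filter_add_card_filter_not
        (s := K') (p := fun u => C u = C v)
      have hd : (K'.filter fun u => ¬(C u = C v)).card ≤
          (∑ u ∈ K', mk' G C v u) + bN G K' v := by
        rw [Finset.card_filter, bN, ← Finset.sum_add_distrib]
        refine Finset.sum_le_sum fun u hu => ?_
        by_cases hc : C u = C v
        · simp [hc]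
        · rw [if_pos hc]
          have h1 : mk' G C v u = fA G v u := mk'_cut G C (fun h => hc h.symm)
          rw [h1]
          exact one_le_fA_add_eNA G (fun h => hc (by rw [h]))
      have hav := hsplit v hv
      omega
    have hAsum : k * k ≤ 2 * (∑ u ∈ K', ∑ v ∈ K', mk' G C u v) +
        2 * ∑ v ∈ K', bN G K' v := by
      have h := Finset.sum_le_sum hA
      rw [Finset.sum_const, smul_eq_mul, ← hkdef] at h
      rw [Finset.sum_add_distrib, ← Finset.mul_sum, ← Finset.mul_sum] at h
      exact h
    have hsum_split : ∑ v ∈ K', (bN G K' v + cN G K' v) =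
        ∑ v ∈ K', bN G K' v + ∑ v ∈ K', cN G K' v := Finset.sum_add_distrib
    omega
end

section
/- Let a = b = 0.05. Given a clustering C with violation D, the cleaning procedure — which for each cluster marks every vertex v with |N(v) △ C(v)| ≥ a|C(v)|, and replaces a cluster C₀ by its unmarked vertices plus singletons if fewer than b|C₀| vertices are marked, or by all singletons otherwise — produces a clustering C' with violation D' satisfying |D'| ≤ (1 + 1/(ab))|D|. -/
open scoped symmDiff Classical

/-- The cluster with label `i` in the clustering `C`. -/
def clusterSet {V : Type*} (C : V → ℕ) (i : ℕ) : Set V := {v | C v = i}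

/-- The set of marked vertices of the cluster with label `i`:
those `v` in the cluster with `|N(v) ∆ C(v)| ≥ a·|C(v)|`. -/
def markedSet {V : Type*} (G : SimpleGraph V) (a : ℝ) (C : V → ℕ) (i : ℕ) : Set V :=
  {v | C v = i ∧ a * ((clusterSet C i).ncard : ℝ) ≤ ((closedNbhd G v ∆ clusterSet C i).ncard : ℝ)}

/-- The cleaning procedure: in each cluster, if fewer than `b·|C₀|` vertices
are marked, keep the unmarked vertices together (label `Sum.inl i`) and make
each marked vertex a singleton; otherwise split the cluster entirely into
singletons (label `Sum.inr v`). -/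
noncomputable def cleaned {V : Type*} (G : SimpleGraph V) (a b : ℝ) (C : V → ℕ) : V → ℕ ⊕ V :=
  fun v =>
    if ((markedSet G a C (C v)).ncard : ℝ) < b * ((clusterSet C (C v)).ncard : ℝ) ∧
        v ∉ markedSet G a C (C v)
    then Sum.inl (C v) else Sum.inr v


lemma sym2_exists {α : Type*} (s : Sym2 α) : ∃ x y, s = s(x, y) :=
  Sym2.ind (fun x y => ⟨x, y, rfl⟩) s

lemma mem_clusterPairs_mk {V α : Type*} {C : V → α} {u v : V} :
    s(u, v) ∈ clusterPairs C ↔ u ≠ v ∧ C u = C v := by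
  constructor
  · rintro ⟨hd, h⟩
    exact ⟨fun huv => hd (by simp [huv]), h u v rfl⟩
  · rintro ⟨hne, hC⟩
    refine ⟨by simp [hne], ?_⟩
    intro u' v' h
    rw [Sym2.eq_iff] at h
    rcases h with ⟨h1, h2⟩ | ⟨h1, h2⟩
    · rw [← h1, ← h2]; exact hC
    · rw [← h1, ← h2]; exact hC.symm

lemma cleaned_clusterPairs_subset {V : Type*} (G : SimpleGraph V) (a b : ℝ) (C : V → ℕ) :
    clusterPairs (cleaned G a b C) ⊆ clusterPairs C := by
  rintro s ⟨hd, h⟩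
  refine ⟨hd, fun u v hs => ?_⟩
  have hne : u ≠ v := fun e => hd (by rw [hs]; simp [e])
  have hcl : cleaned G a b C u = cleaned G a b C v := h u v hs
  simp only [cleaned] at hcl
  split_ifs at hcl <;> simp at hcl <;>
    first | exact hcl | exact absurd hcl hne

lemma charge {V : Type*} [Fintype V] (G : SimpleGraph V) (C : V → ℕ) (v : V) :
    (closedNbhd G v ∆ clusterSet C (C v)).ncard ≤
      {s ∈ clusterPairs C ∆ G.edgeSet | v ∈ s}.ncard := by
  have hvK : v ∈ clusterSet C (C v) := rfl
  have hvN : v ∈ closedNbhd G v := Set.mem_insert _ _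
  have hvnot : v ∉ closedNbhd G v ∆ clusterSet C (C v) := by
    rw [Set.mem_symmDiff]; push_neg; exact ⟨fun _ => hvK, fun _ => hvN⟩
  apply Set.ncard_le_ncard_of_injOn (fun u => s(v, u))
  · intro u hu
    have hne : v ≠ u := fun e => hvnot (e ▸ hu)
    rw [Set.mem_symmDiff] at hu
    refine ⟨?_, Sym2.mem_mk_left v u⟩
    rcases hu with ⟨hN, hK⟩ | ⟨hK, hN⟩
    · -- u ∈ N(v), u ∉ K : edge, not cluster pair
      rw [Set.mem_symmDiff]
      refine Or.inr ⟨?_, ?_⟩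
      · rw [SimpleGraph.mem_edgeSet]
        rcases Set.mem_insert_iff.mp hN with h | h
        · exact absurd h.symm hne
        · exact h
      · intro hP
        exact hK (show C u = C v from (mem_clusterPairs_mk.mp hP).2.symm)
    · -- u ∈ K, u ∉ N(v) : cluster pair, not edge
      rw [Set.mem_symmDiff]
      left
      constructor
      · exact mem_clusterPairs_mk.mpr ⟨hne, hK.symm⟩
      · intro hE
        rw [SimpleGraph.mem_edgeSet] at hE
        exact hN (Set.mem_insert_iff.mpr (Or.inr hE))
  · intro u1 h1 u2 h2 h
    rw [Sym2.eq_iff] at h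
    rcases h with ⟨_, h⟩ | ⟨h1', h2'⟩
    · exact h
    · exact h2'.trans h1'

lemma sum_deg {V : Type*} [Fintype V] (D : Finset (Sym2 V)) :
    ∑ v : V, (D.filter (fun s => v ∈ s)).card ≤ 2 * D.card := by
  calc ∑ v : V, (D.filter (fun s => v ∈ s)).card
      = ∑ v : V, ∑ s ∈ D, (if v ∈ s then 1 else 0) := by
        simp only [Finset.card_filter]
    _ = ∑ s ∈ D, ∑ v : V, (if v ∈ s then 1 else 0) := Finset.sum_comm
    _ ≤ ∑ s ∈ D, 2 := by
        apply Finset.sum_le_sum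
        intro s _
        obtain ⟨x, y, rfl⟩ := sym2_exists s
        calc ∑ v : V, (if v ∈ s(x, y) then 1 else 0)
            = (Finset.univ.filter (fun v => v ∈ s(x, y))).card := (Finset.card_filter _ _).symm
          _ ≤ ({x, y} : Finset V).card := by
              apply Finset.card_le_card
              intro v hv
              simp only [Finset.mem_filter, Sym2.mem_iff] at hv
              simp [hv.2]
          _ ≤ 2 := Finset.card_insert_le _ _ |>.trans (by simp)
    _ = 2 * D.card := by rw [Finset.sum_const, smul_eq_mul, mul_comm]

-- continuation (appended to aux for testing)
noncomputable def DFin {V : Type*} [Fintype V] (G : SimpleGraph V) (C : V → ℕ) :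
    Finset (Sym2 V) :=
  (Set.toFinite (clusterPairs C ∆ G.edgeSet)).toFinset

noncomputable def fdeg {V : Type*} [Fintype V] (G : SimpleGraph V) (C : V → ℕ) (v : V) : ℕ :=
  ((DFin G C).filter (fun s => v ∈ s)).card

noncomputable def SFin {V : Type*} [Fintype V] (G : SimpleGraph V) (C : V → ℕ) :
    Finset (Sym2 V) :=
  (Set.toFinite (clusterPairs C \ clusterPairs (cleaned G 0.05 0.05 C))).toFinset

noncomputable def KF {V : Type*} [Fintype V] (C : V → ℕ) (i : ℕ) : Finset V :=
  Finset.univ.filter (fun v => C v = i)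

noncomputable def MF {V : Type*} [Fintype V] (G : SimpleGraph V) (C : V → ℕ) (i : ℕ) : Finset V :=
  Finset.univ.filter (fun v => v ∈ markedSet G 0.05 C i)

lemma KF_ncard {V : Type*} [Fintype V] (C : V → ℕ) (i : ℕ) :
    (clusterSet C i).ncard = (KF C i).card := by
  rw [← Set.ncard_coe_finset]
  congr 1
  ext v
  simp [clusterSet, KF]

lemma MF_ncard {V : Type*} [Fintype V] (G : SimpleGraph V) (C : V → ℕ) (i : ℕ) :
    (markedSet G 0.05 C i).ncard = (MF G C i).card := by
  rw [← Set.ncard_coe_finset]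
  congr 1
  ext v
  simp [MF]

lemma chargeK {V : Type*} [Fintype V] (G : SimpleGraph V) (C : V → ℕ) (i : ℕ) (v : V)
    (hv : v ∈ markedSet G 0.05 C i) :
    (0.05 : ℝ) * ((KF C i).card : ℝ) ≤ (fdeg G C v : ℝ) := by
  obtain ⟨hCv, hge⟩ := hv
  have h1 := charge G C v
  rw [hCv] at h1
  have h2 : {s ∈ clusterPairs C ∆ G.edgeSet | v ∈ s}.ncard = fdeg G C v := by
    rw [fdeg, ← Set.ncard_coe_finset]
    congr 1
    ext s
    simp only [Finset.coe_filter, DFin, Set.Finite.mem_toFinset, Set.mem_setOf_eq]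
  rw [← KF_ncard]
  calc (0.05 : ℝ) * ((clusterSet C i).ncard : ℝ)
      ≤ ((closedNbhd G v ∆ clusterSet C i).ncard : ℝ) := hge
    _ ≤ (fdeg G C v : ℝ) := by exact_mod_cast h2 ▸ h1

lemma percluster {V : Type*} [Fintype V] [DecidableEq V] (G : SimpleGraph V) (C : V → ℕ)
    (i : ℕ) :
    ((((SFin G C).filter (fun s => ∀ u ∈ s, C u = i)).card : ℝ)) ≤
      200 * ∑ v ∈ MF G C i, (fdeg G C v : ℝ) := by
  classical
  set SI := (SFin G C).filter (fun s => ∀ u ∈ s, C u = i) with hSIdef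
  set k := (KF C i).card with hk
  set m := (MF G C i).card with hm
  have hsum : (m : ℝ) * (0.05 * (k : ℝ)) ≤ ∑ v ∈ MF G C i, (fdeg G C v : ℝ) := by
    have h := Finset.card_nsmul_le_sum (MF G C i) (fun v => (fdeg G C v : ℝ))
      ((0.05 : ℝ) * k) (fun v hv => chargeK G C i v (by simpa [MF] using hv))
    simpa [nsmul_eq_mul, mul_comm, mul_assoc, mul_left_comm] using h
  have hmem : ∀ s ∈ SI, ∃ u v, s = s(u, v) ∧ u ≠ v ∧ C u = i ∧ C v = i ∧
      cleaned G 0.05 0.05 C u ≠ cleaned G 0.05 0.05 C v := by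
    intro s hs
    rw [hSIdef, Finset.mem_filter] at hs
    obtain ⟨hsS, hall⟩ := hs
    rw [SFin, Set.Finite.mem_toFinset] at hsS
    obtain ⟨hP, hnP'⟩ := hsS
    obtain ⟨u, v, rfl⟩ := sym2_exists s
    have hne : u ≠ v := (mem_clusterPairs_mk.mp hP).1
    have hCu : C u = i := hall u (Sym2.mem_mk_left u v)
    have hCv : C v = i := hall v (Sym2.mem_mk_right u v)
    refine ⟨u, v, rfl, hne, hCu, hCv, fun hcl => hnP' ?_⟩
    exact mem_clusterPairs_mk.mpr ⟨hne, hcl⟩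
  by_cases hc : ((markedSet G 0.05 C i).ncard : ℝ) < 0.05 * ((clusterSet C i).ncard : ℝ)
  · -- cluster kept
    have hsub : SI ⊆ ((MF G C i) ×ˢ (KF C i)).image (fun p => s(p.1, p.2)) := by
      intro s hs
      obtain ⟨u, v, rfl, hne, hCu, hCv, hclne⟩ := hmem s hs
      have hKu : u ∈ KF C i := by simp [KF, hCu]
      have hKv : v ∈ KF C i := by simp [KF, hCv]
      by_cases hmu : u ∈ markedSet G 0.05 C i
      · exact Finset.mem_image.mpr ⟨(u, v),
          Finset.mem_product.mpr ⟨by simp [MF, hmu], hKv⟩, rfl⟩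
      · by_cases hmv : v ∈ markedSet G 0.05 C i
        · exact Finset.mem_image.mpr ⟨(v, u),
            Finset.mem_product.mpr ⟨by simp [MF, hmv], hKu⟩, Sym2.eq_swap⟩
        · exfalso
          apply hclne
          have h1 : cleaned G 0.05 0.05 C u = Sum.inl i := by
            simp only [cleaned, hCu]
            rw [if_pos ⟨hc, hmu⟩]
          have h2 : cleaned G 0.05 0.05 C v = Sum.inl i := by
            simp only [cleaned, hCv]
            rw [if_pos ⟨hc, hmv⟩]
          rw [h1, h2]
    have hcard : ((SI.card : ℕ) : ℝ) ≤ (m : ℝ) * k := by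
      have h1 := Finset.card_le_card hsub
      have h2 := Finset.card_image_le (s := (MF G C i) ×ˢ (KF C i))
        (f := fun p : V × V => s(p.1, p.2))
      rw [Finset.card_product] at h2
      exact_mod_cast h1.trans h2
    nlinarith [hsum, hcard, Nat.cast_nonneg (α := ℝ) m, Nat.cast_nonneg (α := ℝ) k]
  · -- cluster split
    push_neg at hc
    rw [MF_ncard, KF_ncard] at hc
    have hsub : SI ⊆ (KF C i).offDiag.image Sym2.mk.uncurry := by
      intro s hs
      obtain ⟨u, v, rfl, hne, hCu, hCv, _⟩ := hmem s hs
      exact Finset.mem_image.mpr ⟨(u, v),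
        Finset.mem_offDiag.mpr ⟨by simp [KF, hCu], by simp [KF, hCv], hne⟩, rfl⟩
    have h2m : 2 * SI.card ≤ k * k := by
      calc 2 * SI.card ≤ 2 * ((KF C i).offDiag.image Sym2.mk.uncurry).card :=
            Nat.mul_le_mul_left 2 (Finset.card_le_card hsub)
        _ = (KF C i).offDiag.card := Sym2.two_mul_card_image_offDiag _
        _ = k * k - k := Finset.offDiag_card _
        _ ≤ k * k := Nat.sub_le _ _
    have hcard : ((SI.card : ℕ) : ℝ) ≤ (k : ℝ) * k / 2 := by
      have h : (2 : ℝ) * (SI.card : ℝ) ≤ (k : ℝ) * k := by exact_mod_cast h2m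
      linarith
    have hmul := mul_le_mul_of_nonneg_right hc
      (by positivity : (0 : ℝ) ≤ 0.05 * (k : ℝ))
    nlinarith [hsum, hcard, hc, Nat.cast_nonneg (α := ℝ) k, hmul]

theorem stmt8 {V : Type*} [Fintype V] [DecidableEq V]
    (G : SimpleGraph V) (C : V → ℕ) :
    (ccCost (cleaned G 0.05 0.05 C) G.edgeSet : ℝ) ≤
      (1 + 1 / (0.05 * 0.05)) * (ccCost C G.edgeSet : ℝ) := by
  classical
  have hPsub := cleaned_clusterPairs_subset G 0.05 0.05 C
  set D : Set (Sym2 V) := clusterPairs C ∆ G.edgeSet with hD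
  set S : Set (Sym2 V) := clusterPairs C \ clusterPairs (cleaned G 0.05 0.05 C) with hS
  have hsub : clusterPairs (cleaned G 0.05 0.05 C) ∆ G.edgeSet ⊆ D ∪ S := by
    intro s hs
    rw [Set.mem_symmDiff] at hs
    rcases hs with ⟨h1, h2⟩ | ⟨h1, h2⟩
    · exact Or.inl (Set.mem_symmDiff.mpr (Or.inl ⟨hPsub h1, h2⟩))
    · by_cases hp : s ∈ clusterPairs C
      · exact Or.inr ⟨hp, h2⟩
      · exact Or.inl (Set.mem_symmDiff.mpr (Or.inr ⟨h1, hp⟩))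
  have hDfin : D.ncard = (DFin G C).card := Set.ncard_eq_toFinset_card _ _
  have hSfin : S.ncard = (SFin G C).card := Set.ncard_eq_toFinset_card _ _
  have hcost1 : (ccCost (cleaned G 0.05 0.05 C) G.edgeSet : ℝ) ≤
      (D.ncard : ℝ) + (S.ncard : ℝ) := by
    have h1 : ccCost (cleaned G 0.05 0.05 C) G.edgeSet ≤ (D ∪ S).ncard :=
      Set.ncard_le_ncard hsub (Set.toFinite _)
    have h2 := Set.ncard_union_le D S
    exact_mod_cast h1.trans h2
  -- cover S by clusters
  have hcover : SFin G C ⊆ (Finset.univ.image C).biUnion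
      (fun i => (SFin G C).filter (fun s => ∀ u ∈ s, C u = i)) := by
    intro s hs
    have hsS : s ∈ S := by
      rw [hS]
      rw [SFin, Set.Finite.mem_toFinset] at hs
      exact hs
    obtain ⟨u, v, rfl⟩ := sym2_exists s
    have hC := (mem_clusterPairs_mk.mp hsS.1).2
    refine Finset.mem_biUnion.mpr ⟨C u, Finset.mem_image_of_mem C (Finset.mem_univ u),
      Finset.mem_filter.mpr ⟨hs, ?_⟩⟩
    intro w hw
    rcases Sym2.mem_iff.mp hw with rfl | rfl
    · rfl
    · exact hC.symm
  have hS1 : ((SFin G C).card : ℝ) ≤ ∑ i ∈ Finset.univ.image C,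
      ((((SFin G C).filter (fun s => ∀ u ∈ s, C u = i)).card : ℕ) : ℝ) := by
    have h := (Finset.card_le_card hcover).trans Finset.card_biUnion_le
    exact_mod_cast h
  have hdisj : (↑(Finset.univ.image C) : Set ℕ).PairwiseDisjoint (fun i => MF G C i) := by
    intro i _ j _ hij
    refine Finset.disjoint_left.mpr fun v hvi hvj => hij ?_
    have h1 : C v = i := ((Finset.mem_filter.mp hvi).2).1
    have h2 : C v = j := ((Finset.mem_filter.mp hvj).2).1
    exact h1.symm.trans h2
  have hS2 : ((SFin G C).card : ℝ) ≤ 200 * ∑ v : V, (fdeg G C v : ℝ) := by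
    calc ((SFin G C).card : ℝ)
        ≤ ∑ i ∈ Finset.univ.image C,
          ((((SFin G C).filter (fun s => ∀ u ∈ s, C u = i)).card : ℕ) : ℝ) := hS1
      _ ≤ ∑ i ∈ Finset.univ.image C, 200 * ∑ v ∈ MF G C i, (fdeg G C v : ℝ) :=
          Finset.sum_le_sum (fun i _ => percluster G C i)
      _ = 200 * ∑ i ∈ Finset.univ.image C, ∑ v ∈ MF G C i, (fdeg G C v : ℝ) := by
          rw [Finset.mul_sum]
      _ ≤ 200 * ∑ v : V, (fdeg G C v : ℝ) := by
          gcongr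
          rw [← Finset.sum_biUnion hdisj]
          exact Finset.sum_le_sum_of_subset_of_nonneg (Finset.subset_univ _)
            (fun v _ _ => by positivity)
  have hS3 : ∑ v : V, (fdeg G C v : ℝ) ≤ 2 * ((DFin G C).card : ℝ) := by
    have h := sum_deg (DFin G C)
    unfold fdeg
    exact_mod_cast h
  have hfinal : (S.ncard : ℝ) ≤ 400 * (D.ncard : ℝ) := by
    rw [hSfin, hDfin]
    linarith
  have e1 : ccCost C G.edgeSet = D.ncard := by rw [hD]; rfl
  have h401 : (1 + 1 / (0.05 * 0.05) : ℝ) = 401 := by norm_num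
  rw [h401, e1]
  linarith
end

section
/- With a = b = 0.05, every non-singleton cluster produced by the cleaning procedure is ((a+b)/(1−b))-agreeing; in particular, since (a+b)/(1−b) = 2/19 < 1/6, the output clustering is strong (every non-singleton cluster is (1/6)-agreeing). -/
open scoped symmDiff Classical

theorem stmt9 {V : Type*} [Fintype V] [DecidableEq V]
    (G : SimpleGraph V) (C : V → ℕ) (L : ℕ ⊕ V)
    (h2 : 2 ≤ ({v | cleaned G 0.05 0.05 C v = L} : Set V).ncard) :
    Agreeing G ((0.05 + 0.05) / (1 - 0.05)) {v | cleaned G 0.05 0.05 C v = L} ∧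
    Agreeing G (1/6) {v | cleaned G 0.05 0.05 C v = L} := by
  have hfin : ∀ s : Set V, s.Finite := fun s => s.toFinite
  obtain i | w := L
  case inr =>
    exfalso
    have hsub : {v | cleaned G 0.05 0.05 C v = Sum.inr w} ⊆ {w} := by
      intro v hv
      simp only [Set.mem_setOf_eq, cleaned] at hv
      split_ifs at hv
      all_goals simp only [Set.mem_singleton_iff]
      all_goals
        exact Sum.inr.inj hv
    have := Set.ncard_le_ncard hsub (Set.finite_singleton w)
    simp only [Set.ncard_singleton] at this
    omega
  case inl =>
    set K := {v | cleaned G 0.05 0.05 C v = Sum.inl i} with hKdef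
    have hMC : markedSet G 0.05 C i ⊆ clusterSet C i := fun v hv => hv.1
    have hmem : ∀ v, v ∈ K ↔ C v = i ∧
        (((markedSet G 0.05 C i).ncard : ℝ) < 0.05 * ((clusterSet C i).ncard : ℝ) ∧
          v ∉ markedSet G 0.05 C i) := by
      intro v
      simp only [hKdef, Set.mem_setOf_eq, cleaned]
      constructor
      · intro hv
        split_ifs at hv with h
        · have hCv : C v = i := by simpa using hv
          rw [hCv] at h
          exact ⟨hCv, h⟩
      · rintro ⟨hCv, h⟩
        rw [hCv, if_pos h]
    have hne : K.Nonempty := Set.nonempty_of_ncard_ne_zero (by omega)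
    obtain ⟨v₀, hv₀⟩ := hne
    have hcond := ((hmem v₀).1 hv₀).2.1
    have hKeq : K = clusterSet C i \ markedSet G 0.05 C i := by
      ext v
      simp only [hmem, Set.mem_diff, clusterSet, Set.mem_setOf_eq]
      exact ⟨fun h => ⟨h.1, h.2.2⟩, fun h => ⟨h.1, hcond, h.2⟩⟩
    have hMle : (markedSet G 0.05 C i).ncard ≤ (clusterSet C i).ncard :=
      Set.ncard_le_ncard hMC (hfin _)
    have hKcard : (K.ncard : ℝ) =
        ((clusterSet C i).ncard : ℝ) - ((markedSet G 0.05 C i).ncard : ℝ) := by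
      rw [hKeq, Set.ncard_diff hMC (hfin _)]
      push_cast [hMle]
      ring
    have hCK : (clusterSet C i ∆ K) = markedSet G 0.05 C i := by
      rw [hKeq]
      ext v
      simp only [Set.mem_symmDiff, Set.mem_diff]
      constructor
      · rintro (⟨h1, h2'⟩ | ⟨⟨h1, h2'⟩, h3⟩)
        · by_contra hM; exact h2' ⟨h1, hM⟩
        · exact absurd h1 h3
      · intro hM
        exact Or.inl ⟨hMC hM, fun h => h.2 hM⟩
    have key : ∀ v ∈ K,
        ((closedNbhd G v ∆ K).ncard : ℝ) < (2/19) * K.ncard := by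
      intro v hv
      obtain ⟨hCv, _, hvM⟩ := (hmem v).1 hv
      have hNv : ((closedNbhd G v ∆ clusterSet C i).ncard : ℝ) <
          0.05 * ((clusterSet C i).ncard : ℝ) := by
        by_contra h
        exact hvM ⟨hCv, le_of_not_gt h⟩
      have hsub2 : closedNbhd G v ∆ K ⊆
          (closedNbhd G v ∆ clusterSet C i) ∪ (clusterSet C i ∆ K) :=
        symmDiff_triangle _ _ _
      have hcard : ((closedNbhd G v ∆ K).ncard : ℝ) ≤
          ((closedNbhd G v ∆ clusterSet C i).ncard : ℝ) +
          ((markedSet G 0.05 C i).ncard : ℝ) := by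
        have := le_trans (Set.ncard_le_ncard hsub2 (hfin _)) (Set.ncard_union_le _ _)
        rw [hCK] at this
        exact_mod_cast this
      have hc0 : (0:ℝ) ≤ ((clusterSet C i).ncard : ℝ) := Nat.cast_nonneg _
      linarith
    refine ⟨?_, ?_⟩
    · intro v hv
      have hβ : ((0.05 + 0.05) / (1 - 0.05) : ℝ) = 2/19 := by norm_num
      rw [hβ]
      exact key v hv
    · intro v hv
      have hKpos : (0:ℝ) ≤ (K.ncard : ℝ) := Nat.cast_nonneg _
      have := key v hv
      linarith
end

section
/- Fix ε ∈ (0, 0.1). If two vertices u, v are admissible — meaning both are singletons in the preclustering, they are ε-degree-similar, and they have at least ε(d(u)+d(v)) common neighbors that are ε-degree-similar to both — then the number of admissible neighbors of a fixed vertex v among singletons is at most d(v)/ε². (Counting triples (v,p,u) where p is a common ε-degree-similar neighbor: each ε-degree-similar neighbor p of v has degree < d(v)/ε, giving at most d(v)²/ε triples, while each admissible u accounts for at least ε(d(u)+d(v)) ≥ ε d(v) triples.) -/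
open scoped symmDiff Classical

/-- The degree of `v`, as the size of its (open) neighborhood. -/
noncomputable def deg {V : Type*} (G : SimpleGraph V) (v : V) : ℕ :=
  (G.neighborSet v).ncard

/-- `u` and `v` are `ε`-degree-similar: `ε·d(u) < d(v) < d(u)/ε`. -/
def degSim {V : Type*} (G : SimpleGraph V) (ε : ℝ) (u v : V) : Prop :=
  ε * (deg G u : ℝ) < (deg G v : ℝ) ∧ (deg G v : ℝ) < (deg G u : ℝ) / ε

lemma closedNbhd_comm {V : Type*} {G : SimpleGraph V} {a b : V}
    (h : a ∈ closedNbhd G b) : b ∈ closedNbhd G a := by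
  simp only [closedNbhd, Set.mem_insert_iff, SimpleGraph.mem_neighborSet] at h ⊢
  rcases h with h | h
  · exact Or.inl h.symm
  · exact Or.inr h.symm

lemma closedNbhd_toFinset_card {V : Type*} [Fintype V] (G : SimpleGraph V) (p : V) :
    (closedNbhd G p).toFinset.card = deg G p + 1 := by
  classical
  rw [← Set.ncard_eq_toFinset_card', closedNbhd,
    Set.ncard_insert_of_notMem (by simp), deg]

theorem stmt11 {V : Type*} [Fintype V] [DecidableEq V]
    (G : SimpleGraph V) (ε : ℝ) (hε : 0 < ε) (hε' : ε < 0.1)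
    (Sing : V → Prop) (v : V) :
    -- the number of vertices `u` admissible to `v` (both singletons,
    -- degree-similar, with at least `ε(d(u)+d(v))` common neighbors that are
    -- `ε`-degree-similar to both) is at most `d(v)/ε²`
    ((({u : V | u ≠ v ∧ Sing u ∧ Sing v ∧ degSim G ε u v ∧
        ε * ((deg G u : ℝ) + (deg G v : ℝ)) ≤
          (({p : V | p ∈ closedNbhd G u ∩ closedNbhd G v ∧
              degSim G ε p u ∧ degSim G ε p v} : Set V).ncard : ℝ)} : Set V).ncard : ℝ))
      ≤ (deg G v : ℝ) / ε ^ 2 := by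
  classical
  set A : Finset V := Finset.univ.filter (fun u => u ≠ v ∧ Sing u ∧ Sing v ∧ degSim G ε u v ∧
      ε * ((deg G u : ℝ) + (deg G v : ℝ)) ≤
        (({p : V | p ∈ closedNbhd G u ∩ closedNbhd G v ∧
            degSim G ε p u ∧ degSim G ε p v} : Set V).ncard : ℝ)) with hA
  have hset : ({u : V | u ≠ v ∧ Sing u ∧ Sing v ∧ degSim G ε u v ∧
        ε * ((deg G u : ℝ) + (deg G v : ℝ)) ≤
          (({p : V | p ∈ closedNbhd G u ∩ closedNbhd G v ∧
              degSim G ε p u ∧ degSim G ε p v} : Set V).ncard : ℝ)} : Set V).ncard = A.card := by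
    rw [← Set.ncard_coe_finset]
    congr 1
    ext u
    simp [hA]
  rw [hset]
  set dv : ℝ := (deg G v : ℝ) with hdv
  have hdv0 : 0 ≤ dv := Nat.cast_nonneg _
  rcases A.eq_empty_or_nonempty with hAe | ⟨u0, hu0⟩
  · rw [hAe]
    simp only [Finset.card_empty, Nat.cast_zero]
    positivity
  -- d(v) ≥ 1
  have hu0' := (Finset.mem_filter.mp hu0).2
  have hdvpos : 0 < dv := by
    have h1 : ε * (deg G u0 : ℝ) < dv := hu0'.2.2.2.1.1
    have : (0:ℝ) ≤ ε * (deg G u0 : ℝ) := by positivity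
    linarith
  have hdv1 : 1 ≤ dv := by
    have hpos : 0 < deg G v := by rw [hdv] at hdvpos; exact_mod_cast hdvpos
    rw [hdv]
    exact_mod_cast hpos
  -- the sets of "common degree-similar neighbor candidates"
  set B : Finset V := Finset.univ.filter (fun p => p ∈ closedNbhd G v ∧ degSim G ε p v) with hB
  set T : Finset (V × V) :=
    (A ×ˢ B).filter (fun q => q.2 ∈ closedNbhd G q.1 ∧ degSim G ε q.2 q.1) with hT
  -- fibers over the first coordinate
  have hfibA : ∀ u ∈ A, (T.filter fun q => q.1 = u) =
      (B.filter fun p => p ∈ closedNbhd G u ∧ degSim G ε p u).image (fun p => (u, p)) := by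
    intro u hu
    ext ⟨a, b⟩
    simp only [hT, Finset.mem_filter, Finset.mem_product, Finset.mem_image, Prod.mk.injEq]
    constructor
    · rintro ⟨⟨⟨haA, hbB⟩, hc⟩, rfl⟩
      exact ⟨b, ⟨hbB, hc⟩, rfl, rfl⟩
    · rintro ⟨p, ⟨hpB, hc⟩, rfl, rfl⟩
      exact ⟨⟨⟨hu, hpB⟩, hc⟩, rfl⟩
  have hinj1 : ∀ u : V, Function.Injective (fun p : V => (u, p)) := by
    intro u a b h
    simpa using h
  have hinj2 : ∀ p : V, Function.Injective (fun u : V => (u, p)) := by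
    intro p a b h
    simpa using h
  -- the per-u lower bound from the admissibility hypothesis
  have hPu : ∀ u ∈ A, ε * ((deg G u : ℝ) + dv) ≤
      ((T.filter fun q => q.1 = u).card : ℝ) := by
    intro u hu
    have hu' := (Finset.mem_filter.mp hu).2
    have hle := hu'.2.2.2.2
    have hcard : ({p : V | p ∈ closedNbhd G u ∩ closedNbhd G v ∧
        degSim G ε p u ∧ degSim G ε p v} : Set V).ncard =
        (B.filter fun p => p ∈ closedNbhd G u ∧ degSim G ε p u).card := by
      rw [Set.ncard_eq_toFinset_card']
      congr 1
      ext p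
      simp only [Set.mem_toFinset, Set.mem_setOf_eq, Set.mem_inter_iff, hB,
        Finset.mem_filter, Finset.mem_univ, true_and]
      tauto
    rw [hfibA u hu, Finset.card_image_of_injective _ (hinj1 u)]
    rw [hcard] at hle
    exact hle
  -- degree-similarity gives d(u) ≥ ε d(v) on A
  have hduA : ∀ u ∈ A, ε * dv ≤ (deg G u : ℝ) := by
    intro u hu
    have h2 : dv < (deg G u : ℝ) / ε := (Finset.mem_filter.mp hu).2.2.2.2.1.2
    rw [lt_div_iff₀ hε] at h2
    linarith [mul_comm ε dv]
  -- lower bound on |T|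
  have hTlow : (A.card : ℝ) * (ε * (ε * dv + dv)) ≤ (T.card : ℝ) := by
    have hfib : T.card = ∑ u ∈ A, (T.filter fun q => q.1 = u).card :=
      Finset.card_eq_sum_card_fiberwise (fun q hq =>
        (Finset.mem_product.mp (Finset.mem_filter.mp hq).1).1)
    rw [hfib]
    push_cast
    calc (A.card : ℝ) * (ε * (ε * dv + dv)) = ∑ _u ∈ A, ε * (ε * dv + dv) := by
          rw [Finset.sum_const, nsmul_eq_mul]
      _ ≤ ∑ u ∈ A, ((T.filter fun q => q.1 = u).card : ℝ) := by
          apply Finset.sum_le_sum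
          intro u hu
          have h1 := hPu u hu
          have h2 := hduA u hu
          have : ε * (ε * dv + dv) ≤ ε * ((deg G u : ℝ) + dv) := by nlinarith
          linarith
  -- fibers over the second coordinate
  have hfibB : ∀ p ∈ B, (T.filter fun q => q.2 = p) =
      (A.filter fun u => p ∈ closedNbhd G u ∧ degSim G ε p u).image (fun u => (u, p)) := by
    intro p hp
    ext ⟨a, b⟩
    simp only [hT, Finset.mem_filter, Finset.mem_product, Finset.mem_image, Prod.mk.injEq]
    constructor
    · rintro ⟨⟨⟨haA, hbB⟩, hc⟩, rfl⟩
      exact ⟨a, ⟨haA, hc⟩, rfl, rfl⟩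
    · rintro ⟨u, ⟨huA, hc⟩, rfl, rfl⟩
      exact ⟨⟨⟨huA, hp⟩, hc⟩, rfl⟩
  -- each fiber over p has size at most deg p
  have hfibBle : ∀ p ∈ B, ((T.filter fun q => q.2 = p).card : ℝ) ≤ (deg G p : ℝ) := by
    intro p hp
    rw [hfibB p hp, Finset.card_image_of_injective _ (hinj2 p)]
    have hvp : v ∈ (closedNbhd G p).toFinset := by
      rw [Set.mem_toFinset]
      exact closedNbhd_comm ((Finset.mem_filter.mp hp).2.1)
    have hsub : (A.filter fun u => p ∈ closedNbhd G u ∧ degSim G ε p u) ⊆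
        (closedNbhd G p).toFinset.erase v := by
      intro u hu
      rw [Finset.mem_erase, Set.mem_toFinset]
      have huA := Finset.mem_filter.mp hu
      exact ⟨(Finset.mem_filter.mp huA.1).2.1, closedNbhd_comm huA.2.1⟩
    have := Finset.card_le_card hsub
    rw [Finset.card_erase_of_mem hvp, closedNbhd_toFinset_card] at this
    exact_mod_cast le_trans (Nat.cast_le.mpr this) (by norm_num)
  -- degrees in B are at most dv/ε
  have hdegB : ∀ p ∈ B, (deg G p : ℝ) ≤ dv / ε := by
    intro p hp
    have h1 : ε * (deg G p : ℝ) < dv := (Finset.mem_filter.mp hp).2.2.1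
    rw [le_div_iff₀ hε]
    linarith [mul_comm (deg G p : ℝ) ε]
  -- B minus v sits in the neighborhood of v
  have hBev : (B.erase v).card ≤ deg G v := by
    have hsub : B.erase v ⊆ (G.neighborSet v).toFinset := by
      intro p hp
      rw [Set.mem_toFinset]
      obtain ⟨hne, hpB⟩ := Finset.mem_erase.mp hp
      have := (Finset.mem_filter.mp hpB).2.1
      simp only [closedNbhd, Set.mem_insert_iff] at this
      tauto
    have := Finset.card_le_card hsub
    rwa [← Set.ncard_eq_toFinset_card'] at this
  -- upper bound on |T|
  have hThigh : (T.card : ℝ) ≤ dv + dv * (dv / ε) := by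
    have hfib : T.card = ∑ p ∈ B, (T.filter fun q => q.2 = p).card :=
      Finset.card_eq_sum_card_fiberwise (fun q hq =>
        (Finset.mem_product.mp (Finset.mem_filter.mp hq).1).2)
    rw [hfib]
    push_cast
    calc ∑ p ∈ B, ((T.filter fun q => q.2 = p).card : ℝ)
        ≤ ∑ p ∈ B, (deg G p : ℝ) := Finset.sum_le_sum hfibBle
      _ ≤ ∑ p ∈ insert v (B.erase v), (deg G p : ℝ) := by
          apply Finset.sum_le_sum_of_subset_of_nonneg
          · intro p hp
            rcases eq_or_ne p v with h | h
            · simp [h]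
            · exact Finset.mem_insert_of_mem (Finset.mem_erase.mpr ⟨h, hp⟩)
          · intro p _ _
            positivity
      _ = dv + ∑ p ∈ B.erase v, (deg G p : ℝ) := by
          rw [Finset.sum_insert (Finset.notMem_erase v _)]
      _ ≤ dv + ((B.erase v).card : ℝ) * (dv / ε) := by
          gcongr
          have : ∑ p ∈ B.erase v, (deg G p : ℝ) ≤ (B.erase v).card • (dv / ε) := by
            apply Finset.sum_le_card_nsmul
            intro p hp
            exact hdegB p (Finset.mem_of_mem_erase hp)
          rwa [nsmul_eq_mul] at this
      _ ≤ dv + dv * (dv / ε) := by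
          have h1 : ((B.erase v).card : ℝ) ≤ dv := by rw [hdv]; exact_mod_cast hBev
          have h2 : 0 ≤ dv / ε := by positivity
          nlinarith
  -- finish: combine bounds
  have hmain : (A.card : ℝ) * (ε * (ε * dv + dv)) ≤ dv + dv * (dv / ε) :=
    le_trans hTlow hThigh
  have hc0 : (0:ℝ) ≤ (A.card : ℝ) := Nat.cast_nonneg _
  have hmain2 : (A.card : ℝ) * (ε * (ε * dv + dv)) * ε ≤ dv * ε + dv * dv := by
    have := mul_le_mul_of_nonneg_right hmain hε.le
    rw [add_mul, mul_assoc dv (dv / ε) ε, div_mul_cancel₀ _ hε.ne'] at this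
    linarith
  rw [le_div_iff₀ (by positivity : (0:ℝ) < ε ^ 2)]
  have h3 : (A.card : ℝ) * ε ^ 2 * (dv * (1 + ε)) ≤ dv * (dv * (1 + ε)) := by
    nlinarith [mul_le_mul_of_nonneg_left hdv1 hdv0, hε.le, hε']
  have h4 : (0:ℝ) < dv * (1 + ε) := by nlinarith
  exact le_of_mul_le_mul_right h3 h4
end

section
/- Let C be a clustering in which any two vertices in the same cluster are degree-similar so that all vertices of any cluster containing v have degree O(d(v)), and all clusters containing such vertices have size O(d(v)). Then for any cluster S containing a vertex v, |cost(C) − cost(C + S)| = O(d(v)²). -/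
open scoped symmDiff Classical

lemma mem_clusterPairs_iff {V α : Type*} (C : V → α) (u w : V) :
    s(u, w) ∈ clusterPairs C ↔ u ≠ w ∧ C u = C w := by
  constructor
  · rintro ⟨hd, h⟩
    exact ⟨fun h' => hd (by simp [h']), h u w rfl⟩
  · rintro ⟨hne, h⟩
    refine ⟨by simp [hne], fun a b hab => ?_⟩
    rw [Sym2.eq_iff] at hab
    rcases hab with ⟨rfl, rfl⟩ | ⟨rfl, rfl⟩
    · exact h
    · exact h.symm

lemma ccCost_sub_abs_le {V : Type} [Fintype V] {α β : Type} (C : V → α) (C' : V → β)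
    (E : Set (Sym2 V)) :
    |(ccCost C E : ℝ) - (ccCost C' E : ℝ)| ≤
      ((clusterPairs C ∆ clusterPairs C').ncard : ℝ) := by
  have key : ∀ (P Q : Set (Sym2 V)), (P ∆ E).ncard ≤ (Q ∆ E).ncard + (P ∆ Q).ncard := by
    intro P Q
    have h1 : P ∆ E ⊆ (P ∆ Q) ∪ (Q ∆ E) := symmDiff_triangle P Q E
    calc (P ∆ E).ncard ≤ ((P ∆ Q) ∪ (Q ∆ E)).ncard :=
          Set.ncard_le_ncard h1 (Set.toFinite _)
      _ ≤ (P ∆ Q).ncard + (Q ∆ E).ncard := Set.ncard_union_le _ _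
      _ = (Q ∆ E).ncard + (P ∆ Q).ncard := by ring
  rw [abs_sub_le_iff]
  constructor
  · have := key (clusterPairs C) (clusterPairs C')
    unfold ccCost
    have := (Nat.cast_le (α := ℝ)).2 this
    push_cast at this ⊢
    linarith
  · have := key (clusterPairs C') (clusterPairs C)
    unfold ccCost
    have := (Nat.cast_le (α := ℝ)).2 this
    rw [symmDiff_comm (clusterPairs C) (clusterPairs C')]
    push_cast at this ⊢
    linarith

theorem stmt13 (A : ℝ) (hA : 0 ≤ A) :
    ∃ B : ℝ, ∀ (V : Type) (_ : Fintype V) (G : SimpleGraph V) (C : V → ℕ)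
      (S : Set V) (v : V), v ∈ S →
      ((S.ncard : ℝ) ≤ A * (deg G v : ℝ)) →
      (∀ u ∈ S, (deg G u : ℝ) ≤ A * (deg G v : ℝ) ∧
        ((({w | C w = C u} : Set V).ncard : ℝ) ≤ A * (deg G v : ℝ))) →
      |(ccCost C G.edgeSet : ℝ) - (ccCost (addCluster C S) G.edgeSet : ℝ)| ≤
        B * (deg G v : ℝ) ^ 2 := by
  refine ⟨2 * A ^ 2, ?_⟩
  intro V _ G C S v hv hS hdeg
  set d : ℝ := (deg G v : ℝ) with hd
  have hd0 : 0 ≤ d := Nat.cast_nonneg _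
  set C' := addCluster C S with hC'
  -- the set of ordered pairs covering the symmetric difference
  set K : Set (V × V) := {p | p.1 ∈ S ∧ (C p.2 = C p.1 ∨ p.2 ∈ S)} with hK
  have hsub : clusterPairs C ∆ clusterPairs C' ⊆ Sym2.mk.uncurry '' K := by
    intro s hs
    induction s using Sym2.inductionOn with
    | hf u w =>
      rcases hs with ⟨h1, h2⟩ | ⟨h1, h2⟩
      · -- in clusterPairs C, not in clusterPairs C'
        rw [mem_clusterPairs_iff] at h1
        rw [mem_clusterPairs_iff] at h2
        obtain ⟨hne, hcc⟩ := h1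
        push_neg at h2
        have hC'ne : C' u ≠ C' w := h2 hne
        have : u ∈ S ∨ w ∈ S := by
          by_contra h
          push_neg at h
          apply hC'ne
          simp [hC', addCluster, h.1, h.2, hcc]
        rcases this with hu | hw
        · exact ⟨(u, w), ⟨hu, Or.inl hcc.symm⟩, rfl⟩
        · exact ⟨(w, u), ⟨hw, Or.inl hcc⟩, Sym2.eq_swap⟩
      · -- in clusterPairs C', not in clusterPairs C
        rw [mem_clusterPairs_iff] at h1
        obtain ⟨hne, hcc⟩ := h1
        have : u ∈ S ∧ w ∈ S := by
          rw [mem_clusterPairs_iff] at h2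
          push_neg at h2
          by_contra h
          push_neg at h
          simp only [hC', addCluster] at hcc
          by_cases hu : u ∈ S <;> by_cases hw : w ∈ S
          · exact absurd hw (h hu)
          · simp [hu, hw] at hcc
          · simp [hu, hw] at hcc
          · simp only [if_neg hu, if_neg hw, add_left_inj] at hcc
            exact h2 hne hcc
        exact ⟨(u, w), ⟨this.1, Or.inr this.2⟩, rfl⟩
  -- counting K
  have hKcard : (K.ncard : ℝ) ≤ 2 * A ^ 2 * d ^ 2 := by
    classical
    set F : V → Finset (V × V) :=
      fun u => {u} ×ˢ ({w | C w = C u} ∪ S).toFinset with hF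
    have hKF : K.toFinset ⊆ S.toFinset.biUnion F := by
      intro p hp
      rw [Set.mem_toFinset] at hp
      rw [Finset.mem_biUnion]
      refine ⟨p.1, Set.mem_toFinset.2 hp.1, ?_⟩
      rw [hF, Finset.mem_product]
      exact ⟨Finset.mem_singleton_self _, Set.mem_toFinset.2 hp.2⟩
    have h1 : K.ncard ≤ ∑ u ∈ S.toFinset, (F u).card := by
      rw [Set.ncard_eq_toFinset_card']
      exact le_trans (Finset.card_le_card hKF) (Finset.card_biUnion_le)
    have h2 : ∀ u ∈ S.toFinset, ((F u).card : ℝ) ≤ 2 * A * d := by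
      intro u hu
      rw [Set.mem_toFinset] at hu
      have : (F u).card = ({w | C w = C u} ∪ S).ncard := by
        rw [hF, Finset.card_product, Finset.card_singleton, one_mul,
          Set.ncard_eq_toFinset_card']
      rw [this]
      have hle := Set.ncard_union_le ({w | C w = C u}) S
      have hle' := (Nat.cast_le (α := ℝ)).2 hle
      push_cast at hle'
      have := (hdeg u hu).2
      nlinarith
    have h3 : (K.ncard : ℝ) ≤ ∑ u ∈ S.toFinset, ((F u).card : ℝ) := by
      have := (Nat.cast_le (α := ℝ)).2 h1
      push_cast at this
      exact this
    have h4 : ∑ u ∈ S.toFinset, ((F u).card : ℝ) ≤ S.toFinset.card * (2 * A * d) := by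
      calc ∑ u ∈ S.toFinset, ((F u).card : ℝ) ≤ ∑ _u ∈ S.toFinset, (2 * A * d) :=
            Finset.sum_le_sum h2
        _ = S.toFinset.card * (2 * A * d) := by rw [Finset.sum_const, nsmul_eq_mul]
    have hScard : (S.toFinset.card : ℝ) ≤ A * d := by
      rwa [← Set.ncard_eq_toFinset_card']
    have hAd : (0:ℝ) ≤ A * d := mul_nonneg hA hd0
    calc (K.ncard : ℝ) ≤ S.toFinset.card * (2 * A * d) := h3.trans h4
      _ ≤ (A * d) * (2 * A * d) := by
          apply mul_le_mul_of_nonneg_right hScard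
          positivity
      _ = 2 * A ^ 2 * d ^ 2 := by ring
  calc |(ccCost C G.edgeSet : ℝ) - (ccCost C' G.edgeSet : ℝ)|
      ≤ ((clusterPairs C ∆ clusterPairs C').ncard : ℝ) := ccCost_sub_abs_le C C' _
    _ ≤ ((Sym2.mk.uncurry '' K).ncard : ℝ) :=
        Nat.cast_le.2 (Set.ncard_le_ncard hsub (Set.toFinite _))
    _ ≤ (K.ncard : ℝ) := Nat.cast_le.2 (Set.ncard_image_le (Set.toFinite _))
    _ ≤ 2 * A ^ 2 * d ^ 2 := hKcard
end

section
/- Suppose μ < 1/6 and consider a sequence of rebuilds where each rebuild with input violation of size d is followed (before the next rebuild) by exactly μ·d' updates, where d' ≤ d is the output violation size, and each update changes the violation size by at most 1. If a rebuild at update i with input violation size |D| is 'risky' with respect to a later update i* (meaning i* − i ≤ μ|D|), then at most 3 rebuilds occurring between update i and update i* have input violation size greater than |D|/2. -/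
/-- Rebuild sequence model: rebuild `k` happens at (update-)time `t k` with
input violation size `inp k` and output violation size `out k ≤ inp k`; the
next rebuild happens after `μ · out k` further updates, and each update
changes the violation size by at most 1. -/
theorem stmt14 (μ : ℝ) (hμ0 : 0 < μ) (hμ : μ < 1/6)
    (inp out : ℕ → ℝ) (t : ℕ → ℝ) (istar : ℝ)
    (hout_nonneg : ∀ k, 0 ≤ out k)
    (hout_le : ∀ k, out k ≤ inp k)
    (ht : ∀ k, t (k + 1) = t k + μ * out k)
    (hin : ∀ k, |inp (k + 1) - out k| ≤ μ * out k)
    -- the rebuild at time `t 0` with input violation size `inp 0` is risky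
    -- with respect to update `istar`
    (hrisky : istar - t 0 ≤ μ * inp 0) :
    -- at most 3 rebuilds between update `t 0` and `istar` have input
    -- violation size greater than `inp 0 / 2`
    ({k : ℕ | t k < istar ∧ inp 0 / 2 < inp k}).ncard ≤ 3 := by
  set S := {k : ℕ | t k < istar ∧ inp 0 / 2 < inp k} with hSdef
  by_contra hcon
  push_neg at hcon
  have hfin : S.Finite := by
    by_contra hinf
    rw [Set.Infinite.ncard hinf] at hcon
    omega
  have htel : ∀ k, t k = t 0 + μ * ∑ j ∈ Finset.range k, out j := by
    intro k
    induction k with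
    | zero => simp
    | succ n ih => rw [ht n, ih, Finset.sum_range_succ]; ring
  have hub : ∀ k, inp (k + 1) ≤ (1 + μ) * out k := by
    intro k
    have := (abs_le.mp (hin k)).2
    linarith
  have key : ∀ a b c : ℕ, a ∈ S → b ∈ S → c ∈ S → 0 < a → 0 < b → 0 < c →
      a < b → b < c → False := by
    intro a b c ha hb hc ha0 hb0 hc0 hab hbc
    obtain ⟨hta, hia⟩ := ha
    obtain ⟨htb, hib⟩ := hb
    obtain ⟨htc, hic⟩ := hc
    have ea : inp 0 / 2 < (1 + μ) * out (a - 1) := by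
      have h := hub (a - 1)
      have h1 : a - 1 + 1 = a := by omega
      rw [h1] at h; linarith
    have eb : inp 0 / 2 < (1 + μ) * out (b - 1) := by
      have h := hub (b - 1)
      have h1 : b - 1 + 1 = b := by omega
      rw [h1] at h; linarith
    have ec : inp 0 / 2 < (1 + μ) * out (c - 1) := by
      have h := hub (c - 1)
      have h1 : c - 1 + 1 = c := by omega
      rw [h1] at h; linarith
    have hsub : ({a - 1, b - 1, c - 1} : Finset ℕ) ⊆ Finset.range c := by
      intro x hx
      simp only [Finset.mem_insert, Finset.mem_singleton] at hx
      rcases hx with h | h | h <;> simp only [Finset.mem_range] <;> omega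
    have hsum : out (a - 1) + out (b - 1) + out (c - 1) ≤ ∑ j ∈ Finset.range c, out j := by
      have h1 : ∑ j ∈ ({a - 1, b - 1, c - 1} : Finset ℕ), out j
          = out (a - 1) + out (b - 1) + out (c - 1) := by
        rw [Finset.sum_insert (by simp only [Finset.mem_insert, Finset.mem_singleton]; omega),
          Finset.sum_pair (by omega)]
        ring
      calc out (a - 1) + out (b - 1) + out (c - 1)
          = ∑ j ∈ ({a - 1, b - 1, c - 1} : Finset ℕ), out j := h1.symm
        _ ≤ ∑ j ∈ Finset.range c, out j :=
            Finset.sum_le_sum_of_subset_of_nonneg hsub (fun i _ _ => hout_nonneg i)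
    have hlt : t 0 + μ * ∑ j ∈ Finset.range c, out j < t 0 + μ * inp 0 := by
      rw [← htel c]; linarith
    have hsumlt : ∑ j ∈ Finset.range c, out j < inp 0 := by
      have := (mul_lt_mul_iff_right₀ hμ0).mp (by linarith :
        μ * ∑ j ∈ Finset.range c, out j < μ * inp 0)
      exact this
    nlinarith [hout_nonneg (a - 1), hout_nonneg (b - 1), hout_nonneg (c - 1)]
  have hcard : 2 < ((hfin.toFinset).erase 0).card := by
    have h1 : S.ncard = (hfin.toFinset).card := Set.ncard_eq_toFinset_card S hfin
    have h2 := Finset.pred_card_le_card_erase (a := 0) (s := hfin.toFinset)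
    omega
  obtain ⟨a, b, c, ha, hb, hc, hab, hac, hbc⟩ := Finset.two_lt_card_iff.mp hcard
  simp only [Finset.mem_erase, Set.Finite.mem_toFinset] at ha hb hc
  have ha0 : 0 < a := Nat.pos_of_ne_zero ha.1
  have hb0 : 0 < b := Nat.pos_of_ne_zero hb.1
  have hc0 : 0 < c := Nat.pos_of_ne_zero hc.1
  rcases Nat.lt_trichotomy a b with h1 | h1 | h1
  · rcases Nat.lt_trichotomy b c with h2 | h2 | h2
    · exact key a b c ha.2 hb.2 hc.2 ha0 hb0 hc0 h1 h2
    · exact absurd h2 hbc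
    · rcases Nat.lt_trichotomy a c with h3 | h3 | h3
      · exact key a c b ha.2 hc.2 hb.2 ha0 hc0 hb0 h3 h2
      · exact absurd h3 hac
      · exact key c a b hc.2 ha.2 hb.2 hc0 ha0 hb0 h3 h1
  · exact absurd h1 hab
  · rcases Nat.lt_trichotomy a c with h2 | h2 | h2
    · exact key b a c hb.2 ha.2 hc.2 hb0 ha0 hc0 h1 h2
    · exact absurd h2 hac
    · rcases Nat.lt_trichotomy b c with h3 | h3 | h3
      · exact key b c a hb.2 hc.2 ha.2 hb0 hc0 ha0 h3 h2
      · exact absurd h3 hbc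
      · exact key c b a hc.2 hb.2 ha.2 hc0 hb0 ha0 h3 h1
end

section
/- Let μ ≤ 1/(2ĉ) with ĉ ≥ 1. Suppose at update i the algorithm holds a ĉ-approximate clustering with violation D̂ (so |D̂| ≤ ĉ·|D_i*| where D_i* is the optimal violation at update i), and the rebuild is risky with respect to update i* (i.e., i* − i ≤ μ|D̂|). Since each update decreases the optimal violation by at most 1, the optimal violation at all times between i and i* has size at least |D̂|/(2ĉ). Consequently, since every rebuild's output violation is at least the optimum and consecutive rebuilds are separated by at least μ·(output size) updates, the number of rebuilds between update i and update i* is at most 2ĉ. -/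
/-- Rebuild sequence model with approximation guarantee: rebuild `k` happens
at time `t k` with output violation size `out k`, at least the optimal
violation size `opt (t k)` at that time; the next rebuild happens after
`μ · out k` updates; the optimal violation size changes by at most 1 per
update (`opt` is 1-Lipschitz). -/
theorem stmt16 (chat μ : ℝ) (hchat : 1 ≤ chat) (hμ0 : 0 < μ)
    (hμ : μ ≤ 1 / (2 * chat))
    (Dhat istar : ℝ) (hD : 0 < Dhat)
    (t out : ℕ → ℝ) (opt : ℝ → ℝ)
    (hopt_nonneg : ∀ s, 0 ≤ opt s)
    (hlip : ∀ s s' : ℝ, |opt s - opt s'| ≤ |s - s'|)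
    (ht : ∀ k, t (k + 1) = t k + μ * out k)
    (hout : ∀ k, opt (t k) ≤ out k)
    -- at update `t 0` the clustering with violation size `Dhat` is
    -- `chat`-approximate
    (happrox : Dhat ≤ chat * opt (t 0))
    -- the rebuild at `t 0` is risky with respect to update `istar`
    (hrisky : istar - t 0 ≤ μ * Dhat) :
    -- the optimal violation stays at least `Dhat/(2·chat)` up to `istar`,
    -- and at most `2·chat` rebuilds occur between `t 0` and `istar`
    ((∀ s : ℝ, t 0 ≤ s → s ≤ istar → Dhat / (2 * chat) ≤ opt s) ∧
      (({k : ℕ | t k < istar}).ncard : ℝ) ≤ 2 * chat) := by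
  have hc : (0:ℝ) < chat := lt_of_lt_of_le one_pos hchat
  have hcc : (0:ℝ) < 2 * chat := by linarith
  have h2c : μ * (2 * chat) ≤ 1 := (le_div_iff₀ hcc).mp hμ
  set c : ℝ := Dhat / (2 * chat) with hc_def
  have hcpos : 0 < c := div_pos hD hcc
  have hDc : Dhat = 2 * chat * c := by rw [hc_def]; field_simp
  -- Part 1
  have part1 : ∀ s : ℝ, t 0 ≤ s → s ≤ istar → c ≤ opt s := by
    intro s hs1 hs2
    have habs : |opt (t 0) - opt s| ≤ istar - t 0 := by
      refine (hlip _ _).trans ?_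
      rw [abs_of_nonpos (by linarith)]
      linarith
    have h2 : opt (t 0) - opt s ≤ μ * Dhat := by
      have := (abs_le.1 habs).2
      linarith
    rw [hc_def, div_le_iff₀ hcc]
    nlinarith [mul_le_mul_of_nonneg_right h2c (le_of_lt hD),
      mul_le_mul_of_nonneg_left h2 (le_of_lt hcc), happrox, hD]
  have hout_nonneg : ∀ k, 0 ≤ out k := fun k => (hopt_nonneg _).trans (hout k)
  have hmono : Monotone t := by
    apply monotone_nat_of_le_succ
    intro k
    rw [ht]
    nlinarith [hout_nonneg k]
  -- out 0 ≥ 2c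
  have hout0 : 2 * c ≤ out 0 := by
    have h1 : Dhat / chat ≤ opt (t 0) := by
      rw [div_le_iff₀ hc]
      linarith [happrox, mul_comm chat (opt (t 0))]
    have : Dhat / chat = 2 * c := by
      rw [hc_def]; field_simp
    linarith [hout 0]
  -- key inductive bound
  have key : ∀ k, 1 ≤ k → t k < istar → t 0 + ((k:ℝ) + 1) * (μ * c) ≤ t k := by
    intro k
    induction k with
    | zero => intro h; omega
    | succ n ih =>
      intro _ hlt
      rcases Nat.eq_zero_or_pos n with hn | hn
      · subst hn
        rw [ht 0]
        push_cast
        nlinarith [hout0]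
      · have hlt' : t n < istar := lt_of_le_of_lt (hmono (Nat.le_succ n)) hlt
        have h1 := ih hn hlt'
        have h2 : c ≤ opt (t n) :=
          part1 (t n) (hmono (Nat.zero_le n)) (le_of_lt hlt')
        have h3 : c ≤ out n := h2.trans (hout n)
        rw [ht n]
        push_cast
        nlinarith [h3]
  have hbound : ∀ k, t k < istar → ((k:ℝ) + 1) < 2 * chat := by
    intro k hk
    rcases Nat.eq_zero_or_pos k with hk0 | hk1
    · subst hk0; push_cast; linarith
    · have h1 := key k hk1 hk
      have h2 : t k < t 0 + 2 * chat * (μ * c) := by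
        have : istar ≤ t 0 + μ * Dhat := by linarith
        rw [hDc] at this
        nlinarith [hk, this]
      have h3 : ((k:ℝ) + 1) * (μ * c) < 2 * chat * (μ * c) := by linarith
      exact lt_of_mul_lt_mul_right (by linarith [h3]) (le_of_lt (mul_pos hμ0 hcpos))
  refine ⟨part1, ?_⟩
  have hsub : {k : ℕ | t k < istar} ⊆ ↑(Finset.range ⌊2 * chat⌋₊) := by
    intro k hk
    simp only [Finset.coe_range, Set.mem_Iio]
    have h1 := hbound k hk
    have h2 : k + 1 ≤ ⌊2 * chat⌋₊ := by
      apply Nat.le_floor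
      push_cast
      linarith
    omega
  calc (({k : ℕ | t k < istar}).ncard : ℝ)
      ≤ ((↑(Finset.range ⌊2 * chat⌋₊) : Set ℕ).ncard : ℝ) := by
        exact_mod_cast Set.ncard_le_ncard hsub (Finset.range _).finite_toSet
    _ ≤ 2 * chat := by
        rw [Set.ncard_coe_finset, Finset.card_range]
        exact Nat.floor_le (le_of_lt hcc)
end

section
/- In the improved local search analysis: if b₀ ≤ 2α + 2δ ≤ 1, each b_i ≥ 0, and for all i ≥ 1 the relation b_{i−1} + (14/3)α̂ + 4δ − 4/3 > b_i − b_{i−1} holds, and s = 1 + ⌈2/(1/5 − α)⌉ with α̂ = (α + 1/5)/2, then there exists an index 1 ≤ j ≤ s with b_j > b_{j−1} − (1/5 − α̂); letting j₀ be the smallest such index, one derives (20/3)α̂ + 6δ − 4/3 > α̂ − 1/5, equivalently α + (36/17)δ > 1/5. -/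
theorem stmt18 (α δ : ℝ) (hα0 : 0 ≤ α) (hα : α < 1/5) (hδ : 0 < δ)
    (b : ℕ → ℝ)
    (hb_nonneg : ∀ i, 0 ≤ b i)
    (hb0 : b 0 ≤ 2 * α + 2 * δ) (hb1 : 2 * α + 2 * δ ≤ 1)
    -- the recurrence `b_{i-1} + (14/3)·α̂ + 4δ − 4/3 > b_i − b_{i-1}`,
    -- where `α̂ = (α + 1/5)/2`
    (hrec : ∀ i : ℕ,
      b i + (14/3) * ((α + 1/5) / 2) + 4 * δ - 4/3 > b (i + 1) - b i) :
    -- there is an index `1 ≤ j ≤ s`, with `s = 1 + ⌈2/(1/5 − α)⌉`, such that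
    -- `b_j > b_{j-1} − (1/5 − α̂)`; and `α + (36/17)·δ > 1/5`
    (∃ j : ℕ, 1 ≤ j ∧ j ≤ 1 + ⌈2 / (1/5 - α)⌉₊ ∧
      b j > b (j - 1) - (1/5 - (α + 1/5) / 2)) ∧
    α + (36/17) * δ > 1/5 := by
  classical
  set d : ℝ := 1/5 - (α + 1/5) / 2 with hd
  have hdpos : 0 < d := by rw [hd]; linarith
  have hgap : (0:ℝ) < 1/5 - α := by linarith
  set s : ℕ := 1 + ⌈2 / (1/5 - α)⌉₊ with hs
  clear_value d s
  -- existence of a good index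
  have hex : ∃ j : ℕ, 1 ≤ j ∧ j ≤ s ∧ b j > b (j - 1) - d := by
    by_contra h
    push_neg at h
    have hdrop : ∀ k : ℕ, k ≤ s → b k ≤ b 0 - k * d := by
      intro k hk
      induction k with
      | zero => simp
      | succ n ih =>
        have h1 : b (n+1) ≤ b ((n+1) - 1) - d :=
          h (n+1) (Nat.le_add_left 1 n) hk
        simp only [Nat.add_sub_cancel] at h1
        have h2 := ih (le_trans (Nat.le_succ n) hk)
        push_cast
        linarith
    have hbs := hdrop s le_rfl
    have hceil : (2 / (1/5 - α) : ℝ) ≤ (⌈2 / (1/5 - α)⌉₊ : ℝ) := Nat.le_ceil _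
    have hsd : (s : ℝ) * d ≥ 1 + d := by
      have hsr : (s : ℝ) = 1 + (⌈2 / (1/5 - α)⌉₊ : ℝ) := by
        rw [hs]; push_cast; ring
      have hx : (1/5 - α : ℝ) ≠ 0 := ne_of_gt hgap
      have h1 : (2 / (1/5 - α)) * d = 1 := by
        rw [hd, show (1/5 - (α + 1/5)/2 : ℝ) = (1/5 - α)/2 by ring]
        have hy : (0:ℝ) < 1 - 5*α := by linarith
        field_simp
      have h2 : (s : ℝ) * d = d + (⌈2 / (1/5 - α)⌉₊ : ℝ) * d := by
        rw [hsr]; ring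
      have h3 := mul_le_mul_of_nonneg_right hceil (le_of_lt hdpos)
      linarith
    have := hb_nonneg s
    nlinarith
  constructor
  · exact hex
  · -- minimal good index
    have hexQ : ∃ m : ℕ, b (m + 1) > b m - d := by
      obtain ⟨j, hj1, _, hjg⟩ := hex
      refine ⟨j - 1, ?_⟩
      rwa [Nat.sub_add_cancel hj1]
    set m := Nat.find hexQ with hm
    have hQm : b (m + 1) > b m - d := Nat.find_spec hexQ
    have hmono : ∀ k, k ≤ m → b k ≤ b 0 := by
      intro k hk
      induction k with
      | zero => exact le_rfl
      | succ n ih =>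
        have hn : ¬ (b (n + 1) > b n - d) :=
          Nat.find_min hexQ (lt_of_lt_of_le (Nat.lt_succ_self n) hk)
        push_neg at hn
        have := ih (le_trans (Nat.le_succ n) hk)
        linarith
    have hbm : b m ≤ 2 * α + 2 * δ := le_trans (hmono m le_rfl) hb0
    have hr := hrec m
    rw [hd] at hQm
    linarith
end
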